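/- arXiv:2107.11239 — 4 statements merged into one kernel-verified Lean document; each statement's English description precedes it below -/
import Mathlib

section
/- Let (Ω, F, P) and (Ω', F', P') be non-atomic probability spaces, let X₁, X₂ be real random variables on Ω with X₁ ≥ X₂ almost surely, and let X' be a real random variable on Ω' with X' ~ X₁. Then there exists a real random variable X₂' on Ω' such that X' ≥ X₂' almost surely and X₂' ~ X₂. -/
open MeasureTheory ProbabilityTheory

/-- A measure is nonatomic if every measurable set of positive measure admits a measurable
subset of strictly smaller positive measure. -/
def Nonatomic {Ω : Type*} [MeasurableSpace Ω] (μ : Measure Ω) : Prop :=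
  ∀ s : Set Ω, MeasurableSet s → 0 < μ s →
    ∃ t, t ⊆ s ∧ MeasurableSet t ∧ 0 < μ t ∧ μ t < μ s

open MeasureTheory Set Filter Topology
open scoped ENNReal

set_option linter.unusedSectionVars false
set_option linter.unusedVariables false

namespace NonatomicAux

variable {Ω : Type*} [MeasurableSpace Ω] {μ : Measure Ω}

lemma half (hμ : Nonatomic μ) {s : Set Ω} (hs : MeasurableSet s) (h0 : 0 < μ s)
    (hfin : μ s ≠ ∞) : ∃ t, t ⊆ s ∧ MeasurableSet t ∧ 0 < μ t ∧ μ t ≤ μ s / 2 := by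
  obtain ⟨t, hts, htm, ht0, htlt⟩ := hμ s hs h0
  rcases le_or_gt (μ t) (μ s / 2) with h | h
  · exact ⟨t, hts, htm, ht0, h⟩
  · refine ⟨s \ t, diff_subset, hs.diff htm, ?_, ?_⟩
    · rw [measure_diff hts htm.nullMeasurableSet (ne_top_of_lt (htlt.trans_le hfin.lt_top.le))]
      exact tsub_pos_of_lt htlt
    · rw [measure_diff hts htm.nullMeasurableSet (ne_top_of_lt (htlt.trans_le hfin.lt_top.le))]
      calc μ s - μ t ≤ μ s - μ s / 2 := tsub_le_tsub le_rfl h.le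
        _ ≤ μ s / 2 := le_of_eq (ENNReal.sub_half hfin)

lemma small (hμ : Nonatomic μ) {s : Set Ω} (hs : MeasurableSet s) (h0 : 0 < μ s)
    (hfin : μ s ≠ ∞) (n : ℕ) :
    ∃ t, t ⊆ s ∧ MeasurableSet t ∧ 0 < μ t ∧ μ t ≤ μ s / 2 ^ n := by
  induction n with
  | zero => exact ⟨s, Subset.rfl, hs, h0, by simp⟩
  | succ n ih =>
    obtain ⟨t, hts, htm, ht0, htle⟩ := ih
    obtain ⟨u, hut, hum, hu0, hule⟩ := half hμ htm ht0
      (ne_top_of_le_ne_top (by simp [ENNReal.div_eq_top, hfin]) htle)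
    refine ⟨u, hut.trans hts, hum, hu0, hule.trans ?_⟩
    calc μ t / 2 ≤ μ s / 2 ^ n / 2 := by gcongr
      _ = μ s / 2 ^ (n + 1) := by
          rw [pow_succ, div_eq_mul_inv, div_eq_mul_inv, div_eq_mul_inv, mul_assoc,
            ← ENNReal.mul_inv (by simp) (by simp)]

end NonatomicAux

namespace Sierpinski

variable {Ω : Type*} [MeasurableSpace Ω] {μ : Measure Ω}

lemma exists_subset_measure_eq (hμ : Nonatomic μ) [IsFiniteMeasure μ] {s : Set Ω}
    (hs : MeasurableSet s) {c : ℝ≥0∞} (hc : c ≤ μ s) :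
    ∃ t, t ⊆ s ∧ MeasurableSet t ∧ μ t = c := by
  classical
  set Inv : Set Ω → Prop := fun t => t ⊆ s ∧ MeasurableSet t ∧ μ t ≤ c with hInv
  have hstep : ∀ t, Inv t → ∃ t', Inv t' ∧ t ⊆ t' ∧
      (∀ v, v ⊆ s \ t → MeasurableSet v → μ v ≤ c - μ t → μ v ≤ 2 * (μ t' - μ t)) := by
    intro t ht
    set α := ⨆ (v : Set Ω) (_ : v ⊆ s \ t ∧ MeasurableSet v ∧ μ v ≤ c - μ t), μ v with hα
    have hle_α : ∀ v, v ⊆ s \ t → MeasurableSet v → μ v ≤ c - μ t → μ v ≤ α := by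
      intro v h1 h2 h3
      exact le_iSup₂_of_le v ⟨h1, h2, h3⟩ le_rfl
    by_cases h0 : α = 0
    · refine ⟨t, ht, Subset.rfl, fun v h1 h2 h3 => ?_⟩
      simpa [h0] using hle_α v h1 h2 h3
    · have hαle : α ≤ c - μ t := iSup₂_le fun v hv => hv.2.2
      have hαtop : α ≠ ⊤ := by
        refine ne_top_of_le_ne_top ?_ hαle
        exact ne_top_of_le_ne_top (measure_ne_top μ s) (tsub_le_iff_right.mpr
          (le_add_right hc))
      have hhalf : α / 2 < α := ENNReal.half_lt_self h0 hαtop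
      obtain ⟨v, hv⟩ := lt_iSup_iff.mp hhalf
      obtain ⟨⟨hv1, hv2, hv3⟩, hvlt⟩ := lt_iSup_iff.mp hv
      have hdisj : Disjoint t v := by
        rw [Set.disjoint_left]; intro ω hω hωv
        exact (hv1 hωv).2 hω
      have hunion : μ (t ∪ v) = μ t + μ v := measure_union hdisj hv2
      refine ⟨t ∪ v, ⟨Set.union_subset ht.1 (hv1.trans diff_subset),
        ht.2.1.union hv2, ?_⟩, subset_union_left, ?_⟩
      · rw [hunion]
        calc μ t + μ v ≤ μ t + (c - μ t) := add_le_add le_rfl (hv3)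
          _ = c := add_tsub_cancel_of_le ht.2.2
      · intro w h1 h2 h3
        have : μ (t ∪ v) - μ t = μ v := by
          rw [hunion, ENNReal.add_sub_cancel_left (measure_ne_top μ t)]
        rw [this]
        calc μ w ≤ α := hle_α w h1 h2 h3
          _ = α / 2 + α / 2 := (ENNReal.add_halves α).symm
          _ ≤ μ v + μ v := add_le_add hvlt.le hvlt.le
          _ = 2 * μ v := (two_mul _).symm
  choose step hstep1 hstep2 hstep3 using hstep
  have inv0 : Inv ∅ := ⟨Set.empty_subset s, MeasurableSet.empty, by simp⟩
  set T : ℕ → {t : Set Ω // Inv t} :=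
    fun n => Nat.rec ⟨∅, inv0⟩ (fun _ p => ⟨step p.1 p.2, hstep1 p.1 p.2⟩) n with hT
  have hTsucc : ∀ n, (T (n + 1)).1 = step (T n).1 (T n).2 := fun n => rfl
  have hTmono : Monotone fun n => (T n).1 := by
    apply monotone_nat_of_le_succ
    intro n
    rw [hTsucc n]
    exact hstep2 _ _
  set tL := ⋃ n, (T n).1 with htL
  have htLm : MeasurableSet tL := MeasurableSet.iUnion fun n => (T n).2.2.1
  have htLs : tL ⊆ s := Set.iUnion_subset fun n => (T n).2.1
  have hμtL : μ tL = ⨆ n, μ (T n).1 := hTmono.measure_iUnion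
  have htLc : μ tL ≤ c := by
    rw [hμtL]; exact iSup_le fun n => (T n).2.2.2
  refine ⟨tL, htLs, htLm, le_antisymm htLc ?_⟩
  by_contra hlt
  push_neg at hlt
  set d := c - μ tL with hd
  have hd0 : 0 < d := tsub_pos_of_lt hlt
  have hdtop : d ≠ ⊤ := ne_top_of_le_ne_top (ne_top_of_le_ne_top (measure_ne_top μ s) hc)
    tsub_le_self
  have hdiff : d ≤ μ (s \ tL) := by
    rw [measure_diff htLs htLm.nullMeasurableSet (measure_ne_top μ tL)]
    exact tsub_le_tsub_right hc _
  have hdiffpos : 0 < μ (s \ tL) := lt_of_lt_of_le hd0 hdiff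
  -- find n₀ with μ (s \ tL) / 2 ^ n₀ ≤ d
  obtain ⟨n₀, hn₀⟩ : ∃ n : ℕ, μ (s \ tL) / 2 ^ n ≤ d := by
    obtain ⟨n, hn⟩ := ENNReal.exists_nat_gt
      (ENNReal.div_lt_top (measure_ne_top μ _) hd0.ne').ne
    refine ⟨n, ?_⟩
    rw [ENNReal.div_le_iff (by positivity) (by simp)]
    rw [ENNReal.div_lt_iff (Or.inl hd0.ne') (Or.inl hdtop)] at hn
    calc μ (s \ tL) ≤ n * d := hn.le
      _ ≤ 2 ^ n * d := by gcongr; exact_mod_cast (Nat.lt_two_pow_self (n := n)).le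
      _ = d * 2 ^ n := mul_comm _ _
  obtain ⟨w, hw1, hw2, hw3, hw4⟩ := NonatomicAux.small hμ (hs.diff htLm) hdiffpos
    (measure_ne_top μ _) n₀
  have hwd : μ w ≤ d := hw4.trans hn₀
  have hstep' : ∀ n, μ (T n).1 + μ w / 2 ≤ μ (T (n + 1)).1 := by
    intro n
    have hsub : w ⊆ s \ (T n).1 := fun x hx =>
      ⟨(hw1 hx).1, fun hxt => (hw1 hx).2 (Set.mem_iUnion.mpr ⟨n, hxt⟩)⟩
    have hle : μ w ≤ c - μ (T n).1 := by
      refine hwd.trans (tsub_le_tsub_left ?_ c)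
      exact measure_mono (Set.subset_iUnion (fun n => (T n).1) n)
    have h2 := hstep3 (T n).1 (T n).2 w hsub hw2 hle
    rw [← hTsucc n] at h2
    have : μ w / 2 ≤ μ (T (n + 1)).1 - μ (T n).1 := by
      rw [ENNReal.div_le_iff (two_ne_zero) (by norm_num), mul_comm]
      exact h2
    calc μ (T n).1 + μ w / 2 ≤ μ (T n).1 + (μ (T (n + 1)).1 - μ (T n).1) :=
          add_le_add le_rfl this
      _ = μ (T (n + 1)).1 := add_tsub_cancel_of_le (measure_mono (hTmono (Nat.le_succ n)))
  have hgrow : ∀ n : ℕ, (n : ℝ≥0∞) * (μ w / 2) ≤ μ (T n).1 := by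
    intro n
    induction n with
    | zero => simp
    | succ n ih =>
      push_cast [add_mul, one_mul]
      calc (n : ℝ≥0∞) * (μ w / 2) + μ w / 2 ≤ μ (T n).1 + μ w / 2 := add_le_add ih le_rfl
        _ ≤ μ (T (n + 1)).1 := hstep' n
  have hw20 : μ w / 2 ≠ 0 := by
    simp [ENNReal.div_eq_zero_iff, hw3.ne']
  obtain ⟨n, hn⟩ := ENNReal.exists_nat_gt
    (ENNReal.div_lt_top (ne_top_of_le_ne_top (measure_ne_top μ s) hc) hw20).ne
  rw [ENNReal.div_lt_iff (Or.inl hw20) (Or.inl (by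
    exact ne_top_of_le_ne_top (by simp) (ENNReal.half_le_self)))] at hn
  exact absurd ((hn.trans_le (hgrow n)).trans_le (T n).2.2.2) (lt_irrefl c)

end Sierpinski

namespace UniformAux

variable {Ω : Type*} [MeasurableSpace Ω] {μ : Measure Ω}

lemma div_pow_succ (a : ℝ≥0∞) (n : ℕ) : a / 2 ^ n / 2 = a / 2 ^ (n + 1) := by
  rw [pow_succ, div_eq_mul_inv, div_eq_mul_inv, div_eq_mul_inv, mul_assoc,
    ← ENNReal.mul_inv (by simp) (by simp)]

lemma exists_dyadic_btwn {a b : ℝ} (h : a < b) (hb : 0 < b) :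
    ∃ n k : ℕ, a < (k : ℝ) / 2 ^ n ∧ (k : ℝ) / 2 ^ n < b := by
  rcases lt_or_ge a 0 with ha | ha
  · exact ⟨0, 0, by simpa using ha, by simpa using hb⟩
  · obtain ⟨n, hn⟩ := pow_unbounded_of_one_lt (R := ℝ) (b - a)⁻¹ one_lt_two
    have h2n : (0:ℝ) < 2 ^ n := by positivity
    have hba : (0:ℝ) < b - a := by linarith
    have hlt : 1 < (b - a) * 2 ^ n := by
      rw [inv_lt_iff_one_lt_mul₀ hba] at hn
      nlinarith [hn]
    refine ⟨n, ⌊a * 2 ^ n⌋₊ + 1, ?_, ?_⟩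
    · rw [lt_div_iff₀ h2n]
      push_cast
      exact Nat.lt_floor_add_one _
    · rw [div_lt_iff₀ h2n]
      push_cast
      have := Nat.floor_le (by positivity : (0:ℝ) ≤ a * 2 ^ n)
      nlinarith [hlt]

/-- Invariant for the dyadic chain at level `n`. -/
def Inv (μ : Measure Ω) (s : Set Ω) (n : ℕ) (f : ℕ → Set Ω) : Prop :=
  (∀ k, f k ⊆ s) ∧ (∀ k, MeasurableSet (f k)) ∧ Monotone f ∧
    (∀ k, k ≤ 2 ^ n → μ (f k) = (k : ℝ≥0∞) / 2 ^ n * μ s) ∧ (∀ k, 2 ^ n ≤ k → f k = s)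

lemma inv_base {s : Set Ω} (hs : MeasurableSet s) :
    Inv μ s 0 (fun k => if k = 0 then ∅ else s) := by
  refine ⟨fun k => by by_cases h : k = 0 <;> simp [h], fun k => by by_cases h : k = 0 <;> simp [h, hs], ?_, ?_, ?_⟩
  · intro k l hkl
    rcases Nat.eq_zero_or_pos k with rfl | hk
    · simp
    · have h1 : k ≠ 0 := hk.ne'
      have h2 : l ≠ 0 := by omega
      simp [h1, h2]
  · intro k hk
    interval_cases k <;> simp
  · intro k hk
    have : k ≠ 0 := by omega
    simp [this]

lemma cast_div_pow_succ (j n : ℕ) :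
    ((2 * j : ℕ) : ℝ≥0∞) / 2 ^ (n + 1) = (j : ℝ≥0∞) / 2 ^ n := by
  push_cast
  rw [pow_succ, mul_comm (2 ^ n : ℝ≥0∞) 2,
    ENNReal.mul_div_mul_left _ _ (by norm_num) (by norm_num)]

lemma inv_step (hμ : Nonatomic μ) [IsFiniteMeasure μ] {s : Set Ω} (hs : MeasurableSet s)
    {n : ℕ} {f : ℕ → Set Ω} (hf : Inv μ s n f) :
    ∃ g, Inv μ s (n + 1) g ∧ ∀ k, g (2 * k) = f k := by
  classical
  obtain ⟨hsub, hmeas, hmono, hmeasure, htop⟩ := hf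
  -- choose the half-measure insertions
  have hchoice : ∀ j : ℕ, ∃ c, c ⊆ f (j + 1) \ f j ∧ MeasurableSet c ∧
      μ c = μ (f (j + 1) \ f j) / 2 := by
    intro j
    exact Sierpinski.exists_subset_measure_eq hμ ((hmeas (j + 1)).diff (hmeas j))
      (ENNReal.half_le_self)
  choose c hc1 hc2 hc3 using hchoice
  set g : ℕ → Set Ω := fun k => if Even k then f (k / 2) else f (k / 2) ∪ c (k / 2) with hg
  have hg_even : ∀ j, g (2 * j) = f j := by
    intro j
    simp [hg, even_two_mul j, Nat.mul_div_cancel_left _ (by norm_num : 0 < 2)]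
  have hg_odd : ∀ j, g (2 * j + 1) = f j ∪ c j := by
    intro j
    have h1 : ¬ Even (2 * j + 1) := by simp [Nat.even_add_one, even_two_mul]
    have h2 : (2 * j + 1) / 2 = j := by omega
    simp [hg, h1, h2]
  have hcs : ∀ j, c j ⊆ s := fun j => (hc1 j).trans (diff_subset.trans (hsub (j + 1)))
  have hgsub : ∀ k, g k ⊆ s := by
    intro k
    rcases Nat.even_or_odd k with ⟨j, hj⟩ | ⟨j, hj⟩
    · rw [show k = 2 * j by omega, hg_even]; exact hsub j
    · rw [show k = 2 * j + 1 by omega, hg_odd]; exact union_subset (hsub j) (hcs j)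
  have hgmeas : ∀ k, MeasurableSet (g k) := by
    intro k
    rcases Nat.even_or_odd k with ⟨j, hj⟩ | ⟨j, hj⟩
    · rw [show k = 2 * j by omega, hg_even]; exact hmeas j
    · rw [show k = 2 * j + 1 by omega, hg_odd]; exact (hmeas j).union (hc2 j)
  have hgmono : Monotone g := by
    apply monotone_nat_of_le_succ
    intro k
    rcases Nat.even_or_odd k with ⟨j, hj⟩ | ⟨j, hj⟩
    · rw [show k = 2 * j by omega, hg_even, show 2 * j + 1 = 2 * j + 1 from rfl, hg_odd]
      exact subset_union_left
    · rw [show k = 2 * j + 1 by omega, hg_odd, show 2 * j + 1 + 1 = 2 * (j + 1) by ring,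
        hg_even]
      exact union_subset (hmono (Nat.le_succ j)) ((hc1 j).trans diff_subset)
  -- measure of the difference
  have hdiffmeas : ∀ j, j + 1 ≤ 2 ^ n → μ (f (j + 1) \ f j) = μ s / 2 ^ n := by
    intro j hj
    have h1 : μ (f (j + 1)) = μ (f j) + μ s / 2 ^ n := by
      rw [hmeasure (j + 1) hj, hmeasure j (by omega)]
      push_cast
      rw [ENNReal.add_div, add_mul, one_div, ← ENNReal.div_eq_inv_mul]
    rw [measure_diff (hmono (Nat.le_succ j)) (hmeas j).nullMeasurableSet (measure_ne_top μ _),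
      h1, ENNReal.add_sub_cancel_left (measure_ne_top μ _)]
  refine ⟨g, ⟨hgsub, hgmeas, hgmono, ?_, ?_⟩, hg_even⟩
  · -- measure values
    intro k hk
    rcases Nat.even_or_odd k with ⟨j, hj⟩ | ⟨j, hj⟩
    · have hj2 : j ≤ 2 ^ n := by rw [pow_succ] at hk; omega
      rw [show k = 2 * j by omega, hg_even, hmeasure j hj2, cast_div_pow_succ]
    · have hj2 : j + 1 ≤ 2 ^ n := by rw [pow_succ] at hk; omega
      rw [show k = 2 * j + 1 by omega, hg_odd,
        measure_union (disjoint_left.mpr fun ω hω hωc => ((hc1 j) hωc).2 hω) (hc2 j),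
        hmeasure j (by omega), hc3 j, hdiffmeas j hj2, div_pow_succ,
        ← cast_div_pow_succ j n,
        show ((2 * j + 1 : ℕ) : ℝ≥0∞) = ((2 * j : ℕ) : ℝ≥0∞) + 1 by push_cast; ring,
        ENNReal.add_div, add_mul, one_div, ← ENNReal.div_eq_inv_mul]
  · -- top
    intro k hk
    rcases Nat.even_or_odd k with ⟨j, hj⟩ | ⟨j, hj⟩
    · have : 2 ^ n ≤ j := by rw [pow_succ] at hk; omega
      rw [show k = 2 * j by omega, hg_even]; exact htop j this
    · have : 2 ^ n ≤ j := by rw [pow_succ] at hk; omega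
      rw [show k = 2 * j + 1 by omega, hg_odd, htop j this]
      exact union_eq_self_of_subset_right (hcs j)

lemma exists_uniform (hμ : Nonatomic μ) [IsFiniteMeasure μ] {s : Set Ω}
    (hs : MeasurableSet s) :
    ∃ V : Ω → ℝ, Measurable V ∧ (∀ ω, V ω ∈ Icc (0:ℝ) 1) ∧
      ∀ t ∈ Icc (0:ℝ) 1, μ (s ∩ {ω | V ω < t}) = ENNReal.ofReal t * μ s := by
  classical
  choose step hstep1 hstep2 using fun (n : ℕ) (f : ℕ → Set Ω) (hf : Inv μ s n f) =>
    inv_step hμ hs hf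
  set S : ∀ _ : ℕ, {f : ℕ → Set Ω // Inv μ s _ f} :=
    fun n => Nat.rec (motive := fun n => {f : ℕ → Set Ω // Inv μ s n f})
      ⟨_, inv_base hs⟩ (fun n p => ⟨step n p.1 p.2, hstep1 n p.1 p.2⟩) n with hS
  have hSsucc : ∀ n k, (S (n + 1)).1 (2 * k) = (S n).1 k :=
    fun n k => hstep2 n (S n).1 (S n).2 k
  have hrefine : ∀ n m k, (S (n + m)).1 (k * 2 ^ m) = (S n).1 k := by
    intro n m
    induction m with
    | zero => simp
    | succ m ih =>
      intro k
      have : k * 2 ^ (m + 1) = 2 * (k * 2 ^ m) := by ring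
      rw [show n + (m + 1) = (n + m) + 1 by ring, this, hSsucc (n + m) (k * 2 ^ m), ih]
  -- basic facts
  have hsub : ∀ n k, (S n).1 k ⊆ s := fun n => (S n).2.1
  have hmeas : ∀ n k, MeasurableSet ((S n).1 k) := fun n => (S n).2.2.1
  have hmono : ∀ n, Monotone (S n).1 := fun n => (S n).2.2.2.1
  have hval : ∀ n k, k ≤ 2 ^ n → μ ((S n).1 k) = (k : ℝ≥0∞) / 2 ^ n * μ s :=
    fun n => (S n).2.2.2.2.1
  have htop1 : (S 0).1 1 = s := (S 0).2.2.2.2.2 1 le_rfl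
  -- the function V
  set D : Ω → Set ℝ := fun ω => {x : ℝ | ∃ n k : ℕ, ω ∈ (S n).1 k ∧ x = (k : ℝ) / 2 ^ n}
    with hD
  set V : Ω → ℝ := fun ω => sInf (D ω) with hV
  have hDpos : ∀ ω x, x ∈ D ω → 0 ≤ x := by
    rintro ω x ⟨n, k, _, rfl⟩
    positivity
  have hDbdd : ∀ ω, BddBelow (D ω) := fun ω => ⟨0, fun x hx => hDpos ω x hx⟩
  have hDone : ∀ ω, ω ∈ s → (1:ℝ) ∈ D ω := by
    intro ω hω
    exact ⟨0, 1, by rw [htop1]; exact hω, by norm_num⟩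
  have hDempty : ∀ ω, ω ∉ s → D ω = ∅ := by
    intro ω hω
    ext x
    simp only [hD, mem_setOf_eq, mem_empty_iff_false, iff_false]
    rintro ⟨n, k, hmem, rfl⟩
    exact hω (hsub n k hmem)
  have hVmem : ∀ ω, V ω ∈ Icc (0:ℝ) 1 := by
    intro ω
    by_cases hω : ω ∈ s
    · exact ⟨le_csInf ⟨1, hDone ω hω⟩ (hDpos ω), csInf_le (hDbdd ω) (hDone ω hω)⟩
    · simp [hV, hDempty ω hω, Real.sInf_empty]
  -- the key set identity
  have hset : ∀ t : ℝ, s ∩ {ω | V ω < t} =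
      ⋃ p : {p : ℕ × ℕ // (p.2 : ℝ) / 2 ^ p.1 < t}, (S p.1.1).1 p.1.2 := by
    intro t
    ext ω
    constructor
    · rintro ⟨hωs, hωV⟩
      obtain ⟨x, hxD, hxt⟩ := (csInf_lt_iff (hDbdd ω) ⟨1, hDone ω hωs⟩).mp hωV
      obtain ⟨n, k, hmem, rfl⟩ := hxD
      exact mem_iUnion.mpr ⟨⟨(n, k), hxt⟩, hmem⟩
    · intro hω
      obtain ⟨⟨⟨n, k⟩, hp⟩, hmem⟩ := mem_iUnion.mp hω
      refine ⟨hsub n k hmem, lt_of_le_of_lt (csInf_le (hDbdd ω) ⟨n, k, hmem, rfl⟩) hp⟩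
  -- measurability
  have hVmeas : Measurable V := by
    apply measurable_of_Iio
    intro t
    have : V ⁻¹' Iio t = (⋃ p : {p : ℕ × ℕ // (p.2 : ℝ) / 2 ^ p.1 < t}, (S p.1.1).1 p.1.2)
        ∪ (if 0 < t then sᶜ else ∅) := by
      ext ω
      by_cases hω : ω ∈ s
      · have h1 : ω ∈ V ⁻¹' Iio t ↔ ω ∈ s ∩ {ω | V ω < t} := by
          simp [hω, mem_preimage, mem_Iio]
        rw [h1, hset t]
        constructor
        · intro h; exact mem_union_left _ h
        · intro h
          rcases (mem_union _ _ _).mp h with h | h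
          · exact h
          · exfalso
            split at h
            · exact absurd hω (by simpa using h)
            · simp at h
      · have hv0 : V ω = 0 := by simp [hV, hDempty ω hω, Real.sInf_empty]
        constructor
        · intro h
          simp only [mem_preimage, mem_Iio, hv0] at h
          simp [h, hω]
        · intro h
          rcases (mem_union _ _ _).mp h with h | h
          · obtain ⟨⟨⟨n, k⟩, hp⟩, hmem⟩ := mem_iUnion.mp h
            exact absurd (hsub n k hmem) hω
          · split at h
            · simpa [mem_preimage, mem_Iio, hv0]
            · simp at h
    rw [this]
    refine MeasurableSet.union (MeasurableSet.iUnion fun p => hmeas _ _) ?_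
    split
    · exact hs.compl
    · exact MeasurableSet.empty
  refine ⟨V, hVmeas, hVmem, ?_⟩
  -- the measure computation
  intro t ht
  rw [hset t]
  have hdir : Directed (· ⊆ ·)
      (fun p : {p : ℕ × ℕ // (p.2 : ℝ) / 2 ^ p.1 < t} => (S p.1.1).1 p.1.2) := by
    rintro ⟨⟨n, k⟩, hp⟩ ⟨⟨m, j⟩, hq⟩
    have e1 : (S (n + m)).1 (k * 2 ^ m) = (S n).1 k := hrefine n m k
    have e2 : (S (n + m)).1 (j * 2 ^ n) = (S m).1 j := by
      rw [Nat.add_comm n m]; exact hrefine m n j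
    have hv1 : ((k * 2 ^ m : ℕ) : ℝ) / 2 ^ (n + m) < t := by
      push_cast
      rw [pow_add]
      rw [div_lt_iff₀ (by positivity)] at hp ⊢
      calc (k : ℝ) * 2 ^ m = (k : ℝ) * 2 ^ m := rfl
        _ < t * 2 ^ n * 2 ^ m := by
            have := mul_lt_mul_of_pos_right hp (by positivity : (0:ℝ) < 2 ^ m)
            linarith [this]
        _ = t * (2 ^ n * 2 ^ m) := by ring
    have hv2 : ((j * 2 ^ n : ℕ) : ℝ) / 2 ^ (n + m) < t := by
      push_cast
      rw [pow_add]
      rw [div_lt_iff₀ (by positivity)] at hq ⊢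
      calc (j : ℝ) * 2 ^ n < t * 2 ^ m * 2 ^ n := by
            have := mul_lt_mul_of_pos_right hq (by positivity : (0:ℝ) < 2 ^ n)
            linarith [this]
        _ = t * (2 ^ n * 2 ^ m) := by ring
    refine ⟨⟨(n + m, max (k * 2 ^ m) (j * 2 ^ n)), ?_⟩, ?_, ?_⟩
    · rcases max_choice (k * 2 ^ m) (j * 2 ^ n) with h | h <;> rw [h]
      · exact hv1
      · exact hv2
    · dsimp only
      rw [← e1]
      exact hmono (n + m) (le_max_left _ _)
    · dsimp only
      rw [← e2]
      exact hmono (n + m) (le_max_right _ _)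
  rw [hdir.measure_iUnion]
  -- each measure
  have hmeasval : ∀ p : {p : ℕ × ℕ // (p.2 : ℝ) / 2 ^ p.1 < t},
      μ ((S p.1.1).1 p.1.2) = ENNReal.ofReal ((p.1.2 : ℝ) / 2 ^ p.1.1) * μ s := by
    rintro ⟨⟨n, k⟩, hp⟩
    have hk : k ≤ 2 ^ n := by
      by_contra h
      push_neg at h
      have : (1:ℝ) < (k : ℝ) / 2 ^ n := by
        rw [lt_div_iff₀ (by positivity)]
        have : (2:ℝ) ^ n < (k:ℝ) := by exact_mod_cast h
        linarith
      have := this.trans hp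
      exact absurd this (by linarith [ht.2] : ¬ (1:ℝ) < t)
    rw [hval n k hk]
    dsimp only
    rw [ENNReal.ofReal_div_of_pos (by positivity), ENNReal.ofReal_natCast,
      ENNReal.ofReal_pow (by norm_num : (0:ℝ) ≤ 2)]
    norm_num
  simp_rw [fun p => hmeasval p]
  rw [← ENNReal.iSup_mul]
  congr 1
  apply le_antisymm
  · exact iSup_le fun p => ENNReal.ofReal_le_ofReal p.2.le
  · rcases eq_or_lt_of_le ht.1 with h0 | h0
    · simp [← h0]
    · refine ENNReal.le_of_forall_pos_le_add fun ε hε hfin => ?_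
      have hε' : (0:ℝ) < ε := hε
      obtain ⟨n, k, h1, h2⟩ := exists_dyadic_btwn (show t - ε < t by linarith) h0
      calc ENNReal.ofReal t ≤ ENNReal.ofReal ((k:ℝ) / 2 ^ n + ε) :=
            ENNReal.ofReal_le_ofReal (by linarith)
        _ ≤ ENNReal.ofReal ((k:ℝ) / 2 ^ n) + ENNReal.ofReal ε := ENNReal.ofReal_add_le
        _ ≤ (⨆ p : {p : ℕ × ℕ // (p.2 : ℝ) / 2 ^ p.1 < t},
              ENNReal.ofReal ((p.1.2 : ℝ) / 2 ^ p.1.1)) + ε := by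
            gcongr
            · exact le_iSup_of_le ⟨(n, k), h2⟩ le_rfl
            · rw [ENNReal.ofReal_coe_nnreal]

end UniformAux

namespace QuantileAux

variable (m : Measure ℝ) [IsProbabilityMeasure m] {u : ℝ}

lemma exists_cdf_lt (hu : 0 < u) : ∃ x, cdf m x < u :=
  ((tendsto_cdf_atBot m).eventually_lt_const hu).exists

lemma exists_le_cdf (hu : u < 1) : ∃ x, u ≤ cdf m x := by
  obtain ⟨x, hx⟩ := ((tendsto_cdf_atTop m).eventually_const_lt hu).exists
  exact ⟨x, hx.le⟩

lemma bddBelow_le_cdf (hu : 0 < u) : BddBelow {x | u ≤ cdf m x} := by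
  obtain ⟨x0, hx0⟩ := exists_cdf_lt m hu
  refine ⟨x0, fun y hy => ?_⟩
  by_contra h
  push_neg at h
  exact absurd (le_trans hy (monotone_cdf m h.le)) (not_le.mpr hx0)

lemma le_cdf_sInf (hu0 : 0 < u) (hu1 : u < 1) :
    u ≤ cdf m (sInf {x | u ≤ cdf m x}) := by
  set x₀ := sInf {x | u ≤ cdf m x} with hx₀
  have hne : {x | u ≤ cdf m x}.Nonempty := exists_le_cdf m hu1
  have hbdd := bddBelow_le_cdf m hu0
  have hev : ∀ x ∈ Ioi x₀, u ≤ cdf m x := by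
    intro x hx
    obtain ⟨y, hy, hyx⟩ := (csInf_lt_iff hbdd hne).mp hx
    exact hy.trans (monotone_cdf m hyx.le)
  have htd : Tendsto (cdf m) (𝓝[>] x₀) (𝓝 (cdf m x₀)) :=
    ((cdf m).right_continuous x₀).tendsto.mono_left
      (nhdsWithin_mono _ Ioi_subset_Ici_self)
  exact ge_of_tendsto htd (eventually_nhdsWithin_of_forall hev)

lemma quantile_le_iff (hu0 : 0 < u) (hu1 : u < 1) {y : ℝ} :
    sInf {x | u ≤ cdf m x} ≤ y ↔ u ≤ cdf m y := by
  constructor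
  · intro h
    exact (le_cdf_sInf m hu0 hu1).trans (monotone_cdf m h)
  · intro h
    exact csInf_le (bddBelow_le_cdf m hu0) h

end QuantileAux

/-- gluing countably many measurable functions along fibers of `X`. -/
lemma measurable_fiberwise {Ω' : Type*} [MeasurableSpace Ω'] {X : Ω' → ℝ}
    (hX : Measurable X) {A : Set ℝ} (hA : A.Countable) (W : ℝ → Ω' → ℝ)
    (hW : ∀ x, Measurable (W x)) [DecidablePred (· ∈ A)] :
    Measurable (fun ω => if X ω ∈ A then W (X ω) ω else 0) := by
  classical
  intro B hB
  have : (fun ω => if X ω ∈ A then W (X ω) ω else 0) ⁻¹' B =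
      (⋃ a ∈ A, X ⁻¹' {a} ∩ (W a) ⁻¹' B) ∪
        ((X ⁻¹' A)ᶜ ∩ (if (0:ℝ) ∈ B then univ else ∅)) := by
    ext ω
    simp only [mem_preimage]
    constructor
    · intro hωB
      by_cases h : X ω ∈ A
      · refine Or.inl (mem_biUnion h ⟨rfl, ?_⟩)
        simpa [h] using hωB
      · refine Or.inr ⟨h, ?_⟩
        have h0 : (0:ℝ) ∈ B := by simpa [h] using hωB
        simp [h0]
    · intro hω
      rcases hω with hω | ⟨hωA, hω2⟩
      · obtain ⟨a, ha, hxa, hWB⟩ := mem_iUnion₂.mp hω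
        have hxa' : X ω = a := hxa
        have hA' : X ω ∈ A := by rw [hxa']; exact ha
        rw [if_pos hA', hxa']
        exact hWB
      · have h : X ω ∉ A := hωA
        have h0 : (0:ℝ) ∈ B := by
          by_cases hb : (0:ℝ) ∈ B
          · exact hb
          · simp [hb] at hω2
        rw [if_neg h]
        exact h0
  rw [this]
  refine MeasurableSet.union (MeasurableSet.biUnion hA fun a _ =>
    (hX (measurableSet_singleton a)).inter (hW a hB)) (MeasurableSet.inter ?_ ?_)
  · exact (hX hA.measurableSet).compl
  · split
    · exact MeasurableSet.univ
    · exact MeasurableSet.empty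


/-- If `X' ~ X₁ ≥ X₂`, then there is `X₂'` on the second space with `X' ≥ X₂' ~ X₂`. -/
theorem exists_identDistrib_le
    {Ω Ω' : Type*} [MeasurableSpace Ω] [MeasurableSpace Ω']
    (P : Measure Ω) (P' : Measure Ω')
    [IsProbabilityMeasure P] [IsProbabilityMeasure P']
    (hP : Nonatomic P) (hP' : Nonatomic P')
    (X₁ X₂ : Ω → ℝ) (hX₁ : Measurable X₁) (hX₂ : Measurable X₂)
    (hle : ∀ᵐ ω ∂P, X₂ ω ≤ X₁ ω)
    (X' : Ω' → ℝ) (hX' : Measurable X')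
    (hdist : IdentDistrib X' X₁ P' P) :
    ∃ X₂' : Ω' → ℝ, Measurable X₂' ∧ (∀ᵐ ω ∂P', X₂' ω ≤ X' ω) ∧
      IdentDistrib X₂' X₂ P' P := by
  classical
  set μ₁ : Measure ℝ := P'.map X' with hμ₁def
  set μ₂ : Measure ℝ := P.map X₂ with hμ₂def
  haveI inst₁ : IsProbabilityMeasure μ₁ := Measure.isProbabilityMeasure_map hX'.aemeasurable
  haveI inst₂ : IsProbabilityMeasure μ₂ := Measure.isProbabilityMeasure_map hX₂.aemeasurable
  have hcdf_le : ∀ x, cdf μ₁ x ≤ cdf μ₂ x := by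
    intro x
    rw [cdf_eq_real, cdf_eq_real, measureReal_def, measureReal_def]
    apply ENNReal.toReal_mono (measure_ne_top _ _)
    rw [hμ₁def, hμ₂def, hdist.map_eq, Measure.map_apply hX₁ measurableSet_Iic,
      Measure.map_apply hX₂ measurableSet_Iic]
    apply measure_mono_ae
    filter_upwards [hle] with ω hω h
    exact le_trans hω h
  set F₁ := cdf μ₁ with hF₁def
  set L : ℝ → ℝ := Function.leftLim F₁ with hLdef
  have hL_le : ∀ x, L x ≤ F₁ x := fun x => F₁.mono.leftLim_le le_rfl
  have hL_nonneg : ∀ x, 0 ≤ L x := fun x =>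
    le_trans (cdf_nonneg μ₁ (x - 1)) (F₁.mono.le_leftLim (by linarith))
  have hLmono : Monotone L := F₁.mono.leftLim
  have hμ₁meas : F₁.measure = μ₁ := measure_cdf μ₁
  have hIic : ∀ x, μ₁ (Iic x) = ENNReal.ofReal (F₁ x) := fun x => (ofReal_cdf μ₁ x).symm
  have hsing : ∀ x, μ₁ {x} = ENNReal.ofReal (F₁ x - L x) := by
    intro x
    rw [← hμ₁meas, F₁.measure_singleton]
  have hIio : ∀ x, μ₁ (Iio x) = ENNReal.ofReal (L x) := by
    intro x
    have h1 : Iio x = Iic x \ {x} := by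
      ext y
      simp [lt_iff_le_and_ne]
    rw [h1, measure_diff (singleton_subset_iff.mpr self_mem_Iic)
      (measurableSet_singleton x).nullMeasurableSet (measure_ne_top _ _), hIic, hsing,
      ← ENNReal.ofReal_sub _ (sub_nonneg.mpr (hL_le x))]
    congr 1
    ring
  -- atoms
  set A := {x : ℝ | 0 < μ₁ {x}} with hAdef
  have hAcount : A.Countable := by
    have h := Measure.countable_meas_pos_of_disjoint_of_meas_iUnion_ne_top
      (μ := μ₁) (As := fun x : ℝ => {x}) (fun x => measurableSet_singleton x)
      (fun x y hxy => by simp [Function.onFun, disjoint_singleton, hxy])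
      (measure_ne_top _ _)
    exact h
  -- fiberwise uniforms
  have hWex := fun x : ℝ => UniformAux.exists_uniform hP' (hX' (measurableSet_singleton x))
  choose W hWmeas hWmem hWval using hWex
  set H : Ω' → ℝ := fun ω => if X' ω ∈ A then W (X' ω) ω else 0 with hHdef
  have hHmeas : Measurable H := measurable_fiberwise hX' hAcount W hWmeas
  have hHmem : ∀ ω, 0 ≤ H ω ∧ H ω ≤ 1 := by
    intro ω
    rw [hHdef]
    dsimp only
    split
    · exact ⟨(hWmem _ ω).1, (hWmem _ ω).2⟩
    · norm_num
  set U : Ω' → ℝ := fun ω => L (X' ω) + H ω * (F₁ (X' ω) - L (X' ω)) with hUdef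
  have hUmeas : Measurable U :=
    ((hLmono.measurable).comp hX').add
      (hHmeas.mul ((F₁.mono.measurable.comp hX').sub ((hLmono.measurable).comp hX')))
  have hUlb : ∀ ω, L (X' ω) ≤ U ω := fun ω =>
    le_add_of_nonneg_right (mul_nonneg (hHmem ω).1 (sub_nonneg.mpr (hL_le _)))
  have hUub : ∀ ω, U ω ≤ F₁ (X' ω) := by
    intro ω
    have h := mul_le_mul_of_nonneg_right (hHmem ω).2 (sub_nonneg.mpr (hL_le (X' ω)))
    rw [hUdef]
    dsimp only
    nlinarith [h]
  have hfiber : ∀ x, P' (X' ⁻¹' {x}) = μ₁ {x} := fun x =>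
    (Measure.map_apply hX' (measurableSet_singleton x)).symm
  have hIioP : ∀ x, P' (X' ⁻¹' (Iio x)) = ENNReal.ofReal (L x) := fun x => by
    rw [← hIio x, hμ₁def, Measure.map_apply hX' measurableSet_Iio]
  -- KEY: U is uniformly distributed
  have hkey : ∀ u : ℝ, 0 < u → u < 1 → P' {ω | U ω < u} = ENNReal.ofReal u := by
    intro u hu0 hu1
    set x₀ := sInf {x | u ≤ F₁ x} with hx₀def
    have hbdd := QuantileAux.bddBelow_le_cdf μ₁ hu0
    have hF₁x₀ : u ≤ F₁ x₀ := QuantileAux.le_cdf_sInf μ₁ hu0 hu1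
    have hlt : ∀ x, x < x₀ → F₁ x < u := by
      intro x hx
      by_contra h
      push_neg at h
      exact absurd (csInf_le hbdd h) (not_le.mpr hx)
    have hL₀ : L x₀ ≤ u := by
      apply le_of_tendsto (F₁.mono.tendsto_leftLim x₀)
      filter_upwards [self_mem_nhdsWithin] with x hx
      exact (hlt x hx).le
    have hgt : ∀ ω, x₀ < X' ω → u ≤ U ω := by
      intro ω hω
      calc u ≤ F₁ x₀ := hF₁x₀
        _ ≤ L (X' ω) := F₁.mono.le_leftLim hω
        _ ≤ U ω := hUlb ω
    have hlow : ∀ ω, X' ω < x₀ → U ω < u := fun ω hω =>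
      lt_of_le_of_lt (hUub ω) (hlt _ hω)
    by_cases hJ : F₁ x₀ - L x₀ = 0
    · -- no atom at x₀
      have hset : {ω | U ω < u} = X' ⁻¹' (Iio x₀) := by
        ext ω
        simp only [mem_setOf_eq, mem_preimage, mem_Iio]
        constructor
        · intro h
          by_contra hx
          push_neg at hx
          rcases eq_or_lt_of_le hx with heq | hgt'
          · have h5 : L x₀ ≤ U ω := by rw [heq]; exact hUlb ω
            linarith
          · exact absurd h (not_lt.mpr (hgt ω hgt'))
        · exact hlow ω
      rw [hset, hIioP x₀]
      congr 1
      linarith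
    · -- atom at x₀
      have hJpos : 0 < F₁ x₀ - L x₀ :=
        lt_of_le_of_ne (sub_nonneg.mpr (hL_le x₀)) (Ne.symm hJ)
      have hA₀ : x₀ ∈ A := by
        rw [hAdef]
        simp only [mem_setOf_eq]
        rw [hsing]
        exact ENNReal.ofReal_pos.mpr hJpos
      set c := (u - L x₀) / (F₁ x₀ - L x₀) with hcdef
      have hc0 : 0 ≤ c := div_nonneg (by linarith) hJpos.le
      have hc1 : c ≤ 1 := (div_le_one hJpos).mpr (by linarith)
      have hfibU : ∀ ω, X' ω = x₀ → (U ω < u ↔ W x₀ ω < c) := by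
        intro ω hω
        have hH : H ω = W x₀ ω := by
          rw [hHdef]
          dsimp only
          rw [hω, if_pos hA₀]
        rw [hUdef]
        dsimp only
        rw [hω, hH, hcdef, lt_div_iff₀ hJpos]
        constructor <;> intro <;> nlinarith
      have hset : {ω | U ω < u} =
          X' ⁻¹' (Iio x₀) ∪ (X' ⁻¹' {x₀} ∩ {ω | W x₀ ω < c}) := by
        ext ω
        simp only [mem_setOf_eq, mem_preimage, mem_Iio, mem_union, mem_inter_iff,
          mem_singleton_iff]
        constructor
        · intro h
          rcases lt_trichotomy (X' ω) x₀ with hx | hx | hx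
          · exact Or.inl hx
          · exact Or.inr ⟨hx, (hfibU ω hx).mp h⟩
          · exact absurd h (not_lt.mpr (hgt ω hx))
        · rintro (hx | ⟨hx, hWc⟩)
          · exact hlow ω hx
          · exact (hfibU ω hx).mpr hWc
      have hdisj : Disjoint (X' ⁻¹' (Iio x₀)) (X' ⁻¹' {x₀} ∩ {ω | W x₀ ω < c}) := by
        rw [disjoint_left]
        rintro ω hω ⟨hx, _⟩
        rw [mem_preimage, mem_Iio] at hω
        rw [mem_preimage, mem_singleton_iff] at hx
        exact absurd hx (ne_of_lt hω)
      rw [hset, measure_union hdisj ((hX' (measurableSet_singleton x₀)).inter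
        (measurableSet_lt (hWmeas x₀) measurable_const)), hIioP x₀,
        hWval x₀ c ⟨hc0, hc1⟩, hfiber x₀, hsing x₀,
        ← ENNReal.ofReal_mul hc0, hcdef, div_mul_cancel₀ _ hJ,
        ← ENNReal.ofReal_add (hL_nonneg x₀) (by linarith)]
      congr 1
      ring
  -- auxiliary limit
  have hδtd : Tendsto (fun n : ℕ => 1 / ((n : ℝ) + 2)) atTop (𝓝 0) := by
    have h2 := (tendsto_one_div_add_atTop_nhds_zero_nat (𝕜 := ℝ)).comp (tendsto_add_atTop_nat 1)
    refine h2.congr fun n => ?_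
    simp only [Function.comp_apply]
    push_cast
    ring_nf
  have hU1 : P' {ω | 1 ≤ U ω} = 0 := by
    have hUlt1 : P' {ω | U ω < 1} = 1 := by
      apply le_antisymm prob_le_one
      have htd : Tendsto (fun n : ℕ => ENNReal.ofReal (1 - 1 / ((n : ℝ) + 2))) atTop
          (𝓝 1) := by
        have := ENNReal.tendsto_ofReal (tendsto_const_nhds.sub hδtd :
          Tendsto (fun n : ℕ => (1 : ℝ) - 1 / ((n : ℝ) + 2)) atTop (𝓝 (1 - 0)))
        simpa using this
      refine le_of_tendsto' htd fun n => ?_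
      have h1 : (0:ℝ) < 1 - 1 / ((n : ℝ) + 2) := by
        have : 1 / ((n : ℝ) + 2) < 1 := by
          rw [div_lt_one (by positivity)]
          linarith [Nat.cast_nonneg (α := ℝ) n]
        linarith
      have h2 : 1 - 1 / ((n : ℝ) + 2) < 1 := by
        have : 0 < 1 / ((n : ℝ) + 2) := by positivity
        linarith
      rw [← hkey _ h1 h2]
      apply measure_mono
      intro ω hω
      simp only [mem_setOf_eq] at hω ⊢
      exact lt_trans hω h2
    have hcompl : {ω | 1 ≤ U ω} = {ω | U ω < 1}ᶜ := by
      ext ω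
      simp [not_lt]
    rw [hcompl, measure_compl (measurableSet_lt hUmeas measurable_const)
      (measure_ne_top _ _), hUlt1]
    simp
  have hUle : ∀ v : ℝ, 0 ≤ v → v < 1 → P' {ω | U ω ≤ v} = ENNReal.ofReal v := by
    intro v hv0 hv1
    set δ : ℕ → ℝ := fun n => (1 - v) / ((n : ℝ) + 2) with hδdef
    have hδpos : ∀ n, 0 < δ n := fun n => by
      simp only [hδdef]
      exact div_pos (by linarith) (by positivity)
    have hδlt : ∀ n, v + δ n < 1 := by
      intro n
      have h : δ n < 1 - v := by
        simp only [hδdef]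
        apply div_lt_self (by linarith)
        linarith [Nat.cast_nonneg (α := ℝ) n]
      linarith
    have hiInter : {ω | U ω ≤ v} = ⋂ n : ℕ, {ω | U ω < v + δ n} := by
      ext ω
      simp only [mem_setOf_eq, mem_iInter]
      constructor
      · intro h n
        exact lt_of_le_of_lt h (by linarith [hδpos n])
      · intro h
        by_contra hc
        push_neg at hc
        obtain ⟨N, hN⟩ := exists_nat_gt ((1 - v) / (U ω - v))
        have hh := h N
        have hlt' : δ N < U ω - v := by
          simp only [hδdef]
          rw [div_lt_iff₀ (by positivity : (0:ℝ) < (N : ℝ) + 2)]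
          rw [div_lt_iff₀ (by linarith : (0:ℝ) < U ω - v)] at hN
          nlinarith [hN]
        linarith
    have hanti : Antitone fun n : ℕ => {ω | U ω < v + δ n} := by
      intro n m hnm
      have hδanti : δ m ≤ δ n := by
        have h1v : (0:ℝ) ≤ 1 - v := by linarith
        have h2nm : ((n:ℝ) + 2) ≤ ((m:ℝ) + 2) := by
          have : (n:ℝ) ≤ (m:ℝ) := by exact_mod_cast hnm
          linarith
        simp only [hδdef]
        exact div_le_div_of_nonneg_left h1v (by positivity) h2nm
      intro ω hω
      simp only [mem_setOf_eq] at hω ⊢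
      linarith
    have htd := tendsto_measure_iInter_atTop (μ := P')
      (fun n => (measurableSet_lt hUmeas measurable_const).nullMeasurableSet) hanti
      ⟨0, measure_ne_top _ _⟩
    have heq : ∀ n, P' {ω | U ω < v + δ n} = ENNReal.ofReal (v + δ n) := fun n =>
      hkey _ (by linarith [hδpos n]) (hδlt n)
    have htd2 : Tendsto (fun n => P' {ω | U ω < v + δ n}) atTop
        (𝓝 (ENNReal.ofReal v)) := by
      simp_rw [heq]
      apply ENNReal.tendsto_ofReal
      have hvtd : Tendsto (fun n : ℕ => v + δ n) atTop (𝓝 (v + 0)) := by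
        apply tendsto_const_nhds.add
        simp only [hδdef]
        have := hδtd.const_mul (1 - v)
        simpa [div_eq_mul_inv, mul_comm] using this
      simpa using hvtd
    rw [hiInter]
    exact tendsto_nhds_unique htd htd2
  have hU0 : P' {ω | U ω ≤ 0} = 0 := by
    have := hUle 0 le_rfl one_pos
    simpa using this
  set G := {ω | 0 < U ω ∧ U ω < 1} with hGdef
  have hGmeas : MeasurableSet G :=
    (measurableSet_lt measurable_const hUmeas).inter
      (measurableSet_lt hUmeas measurable_const)
  have hGc : P' Gᶜ = 0 := by
    have hsub : Gᶜ ⊆ {ω | U ω ≤ 0} ∪ {ω | 1 ≤ U ω} := by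
      intro ω hω
      rw [hGdef] at hω
      simp only [mem_compl_iff, mem_setOf_eq, not_and_or, not_lt] at hω
      rcases hω with h | h
      · exact Or.inl h
      · exact Or.inr h
    refine le_antisymm ?_ zero_le
    calc P' Gᶜ ≤ P' ({ω | U ω ≤ 0} ∪ {ω | 1 ≤ U ω}) := measure_mono hsub
      _ ≤ P' {ω | U ω ≤ 0} + P' {ω | 1 ≤ U ω} := measure_union_le _ _
      _ = 0 := by rw [hU0, hU1, add_zero]
  set X₂' : Ω' → ℝ := fun ω =>
    if 0 < U ω ∧ U ω < 1 then sInf {x | U ω ≤ cdf μ₂ x} else X' ω with hX₂'def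
  have hpre : ∀ y : ℝ, X₂' ⁻¹' (Iic y) =
      (G ∩ {ω | U ω ≤ cdf μ₂ y}) ∪ (Gᶜ ∩ X' ⁻¹' (Iic y)) := by
    intro y
    ext ω
    by_cases h : 0 < U ω ∧ U ω < 1
    · have hωG : ω ∈ G := h
      simp only [mem_preimage, mem_Iic, hX₂'def, if_pos h, mem_union, mem_inter_iff,
        mem_compl_iff, mem_setOf_eq]
      rw [QuantileAux.quantile_le_iff μ₂ h.1 h.2]
      constructor
      · intro hq
        exact Or.inl ⟨hωG, hq⟩
      · rintro (⟨_, hq⟩ | ⟨hn, _⟩)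
        · exact hq
        · exact absurd hωG hn
    · have hωG : ω ∉ G := h
      simp only [mem_preimage, mem_Iic, hX₂'def, if_neg h, mem_union, mem_inter_iff,
        mem_compl_iff, mem_setOf_eq]
      constructor
      · intro hq
        exact Or.inr ⟨hωG, hq⟩
      · rintro (⟨hg, _⟩ | ⟨_, hq⟩)
        · exact absurd hg hωG
        · exact hq
  have hX₂'meas : Measurable X₂' := by
    apply measurable_of_Iic
    intro y
    rw [hpre y]
    exact (hGmeas.inter (measurableSet_le hUmeas measurable_const)).union
      (hGmeas.compl.inter (hX' measurableSet_Iic))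
  refine ⟨X₂', hX₂'meas, ?_, ?_⟩
  · apply Filter.Eventually.of_forall
    intro ω
    rw [hX₂'def]
    dsimp only
    split
    case isTrue h =>
      have h1 : sInf {x | U ω ≤ cdf μ₂ x} ≤ sInf {x | U ω ≤ F₁ x} :=
        csInf_le_csInf (QuantileAux.bddBelow_le_cdf μ₂ h.1)
          (QuantileAux.exists_le_cdf μ₁ h.2)
          (fun x hx => le_trans hx (hcdf_le x))
      have h2 : sInf {x | U ω ≤ F₁ x} ≤ X' ω :=
        csInf_le (QuantileAux.bddBelow_le_cdf μ₁ h.1) (hUub ω)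
      exact le_trans h1 h2
    case isFalse h => exact le_rfl
  · refine ⟨hX₂'meas.aemeasurable, hX₂.aemeasurable, ?_⟩
    apply Measure.ext_of_Iic
    intro y
    rw [Measure.map_apply hX₂'meas measurableSet_Iic, hpre y]
    have hBnull : P' (Gᶜ ∩ X' ⁻¹' (Iic y)) = 0 :=
      le_antisymm (le_trans (measure_mono inter_subset_left) hGc.le) zero_le
    have hunion : P' ((G ∩ {ω | U ω ≤ cdf μ₂ y}) ∪ (Gᶜ ∩ X' ⁻¹' (Iic y))) =
        P' (G ∩ {ω | U ω ≤ cdf μ₂ y}) :=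
      le_antisymm (le_trans (measure_union_le _ _) (by rw [hBnull, add_zero]))
        (measure_mono subset_union_left)
    rw [hunion]
    rcases lt_or_eq_of_le (cdf_le_one μ₂ y) with hF2 | hF2
    · have h1 : P' (G ∩ {ω | U ω ≤ cdf μ₂ y}) = P' {ω | U ω ≤ cdf μ₂ y} := by
        apply le_antisymm (measure_mono inter_subset_right)
        calc P' {ω | U ω ≤ cdf μ₂ y}
            ≤ P' ((G ∩ {ω | U ω ≤ cdf μ₂ y}) ∪ Gᶜ) := measure_mono (fun ω hω => by
              by_cases hg : ω ∈ G
              · exact Or.inl ⟨hg, hω⟩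
              · exact Or.inr hg)
          _ ≤ P' (G ∩ {ω | U ω ≤ cdf μ₂ y}) + P' Gᶜ := measure_union_le _ _
          _ = P' (G ∩ {ω | U ω ≤ cdf μ₂ y}) := by rw [hGc, add_zero]
      rw [h1, hUle _ (cdf_nonneg μ₂ y) hF2, ofReal_cdf]
    · have hGsub : G ⊆ {ω | U ω ≤ cdf μ₂ y} := by
        intro ω hg
        rw [hGdef] at hg
        simp only [mem_setOf_eq] at hg ⊢
        rw [← hF2] at hg
        exact hg.2.le
      rw [inter_eq_left.mpr hGsub]
      have hPG : P' G = 1 := by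
        have h2 := measure_add_measure_compl hGmeas (μ := P')
        rw [hGc, add_zero] at h2
        rw [h2]
        simp
      rw [hPG, ← hμ₂def, ← ofReal_cdf μ₂ y, hF2]
      simp
end

section
/- Let (Ω, F, P) be a non-atomic probability space and let Y : Ω → ℝ be integrable. Suppose the functional X ↦ E[XY] is law-invariant on bounded random variables, i.e., E[XY] = E[X'Y] whenever X and X' are bounded measurable random variables on Ω with X ~ X'. Then E[XY] = E[Y]·E[X] for every bounded measurable random variable X on Ω. -/
open MeasureTheory ProbabilityTheory

open scoped ENNReal

section Aux

variable {Ω : Type*} [MeasurableSpace Ω] {P : Measure Ω} [IsProbabilityMeasure P]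

lemma half (hP : Nonatomic P) {s : Set Ω} (hs : MeasurableSet s) (h0 : 0 < P s) :
    ∃ t, t ⊆ s ∧ MeasurableSet t ∧ 0 < P t ∧ P t ≤ P s / 2 := by
  obtain ⟨t, hts, htm, ht0, htlt⟩ := hP s hs h0
  rcases le_or_gt (P t) (P s / 2) with hle | hgt
  · exact ⟨t, hts, htm, ht0, hle⟩
  · refine ⟨s \ t, Set.diff_subset, hs.diff htm, ?_, ?_⟩
    · rw [measure_diff hts htm.nullMeasurableSet (measure_ne_top P t)]
      exact tsub_pos_of_lt htlt
    · rw [measure_diff hts htm.nullMeasurableSet (measure_ne_top P t)]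
      calc P s - P t ≤ P s - P s / 2 := tsub_le_tsub_left hgt.le _
        _ = P s / 2 := ENNReal.sub_half (measure_ne_top P s)

lemma small (hP : Nonatomic P) {s : Set Ω} (hs : MeasurableSet s) (h0 : 0 < P s) (n : ℕ) :
    ∃ t, t ⊆ s ∧ MeasurableSet t ∧ 0 < P t ∧ P t ≤ P s / 2 ^ n := by
  induction n with
  | zero => exact ⟨s, subset_rfl, hs, h0, by simp⟩
  | succ n ih =>
    obtain ⟨t, hts, htm, ht0, htle⟩ := ih
    obtain ⟨u, hut, hum, hu0, hule⟩ := half hP htm ht0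
    refine ⟨u, hut.trans hts, hum, hu0, hule.trans ?_⟩
    rw [pow_succ]
    calc P t / 2 ≤ (P s / 2 ^ n) / 2 := ENNReal.div_le_div_right htle 2
      _ = P s / (2 ^ n * 2) := by
          rw [div_eq_mul_inv, div_eq_mul_inv, div_eq_mul_inv, mul_assoc,
            ENNReal.mul_inv (by simp) (by simp)]

lemma small' (hP : Nonatomic P) {s : Set Ω} (hs : MeasurableSet s) (h0 : 0 < P s)
    {ε : ℝ≥0∞} (hε : 0 < ε) :
    ∃ t, t ⊆ s ∧ MeasurableSet t ∧ 0 < P t ∧ P t ≤ ε := by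
  obtain ⟨n, hn⟩ := ENNReal.exists_inv_two_pow_lt hε.ne'
  obtain ⟨t, hts, htm, ht0, htle⟩ := small hP hs h0 n
  refine ⟨t, hts, htm, ht0, htle.trans ?_⟩
  calc P s / 2 ^ n ≤ 1 / 2 ^ n := ENNReal.div_le_div_right prob_le_one _
    _ = (2 ^ n)⁻¹ := one_div _
    _ ≤ ε := le_of_lt (by rwa [← ENNReal.inv_pow] at hn)

lemma sierpinski (hP : Nonatomic P) {s : Set Ω} (hs : MeasurableSet s) {r : ℝ≥0∞}
    (hr : r ≤ P s) : ∃ t, t ⊆ s ∧ MeasurableSet t ∧ P t = r := by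
  have hrtop : r ≠ ∞ := (hr.trans_lt (measure_lt_top P s)).ne
  -- the type of approximants
  set T := {A : Set Ω // A ⊆ s ∧ MeasurableSet A ∧ P A ≤ r} with hT
  have key : ∀ A : T, ∃ u : Set Ω, u ⊆ s \ A.1 ∧ MeasurableSet u ∧ P A.1 + P u ≤ r ∧
      ∀ v, v ⊆ s \ A.1 → MeasurableSet v → P A.1 + P v ≤ r → P v ≤ 2 * P u := by
    rintro ⟨A, hAs, hAm, hAr⟩
    by_cases hc : ∀ v, v ⊆ s \ A → MeasurableSet v → P A + P v ≤ r → P v = 0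
    · exact ⟨∅, Set.empty_subset _, MeasurableSet.empty, by simpa using hAr,
        fun v hv1 hv2 hv3 => by simp [hc v hv1 hv2 hv3]⟩
    push_neg at hc
    set c := ⨆ (v : Set Ω) (_ : v ⊆ s \ A ∧ MeasurableSet v ∧ P A + P v ≤ r), P v with hcdef
    have hc0 : 0 < c := by
      obtain ⟨v, hv1, hv2, hv3, hv4⟩ := hc
      have : P v ≤ c := le_iSup₂ (f := fun v _ => P v) v ⟨hv1, hv2, hv3⟩
      exact lt_of_lt_of_le (pos_iff_ne_zero.mpr hv4) this
    have hcr : c ≤ r := by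
      apply iSup₂_le
      rintro v ⟨hv1, hv2, hv3⟩
      exact le_trans le_add_self hv3
    have hctop : c ≠ ∞ := (hcr.trans_lt (lt_of_le_of_lt hr (measure_lt_top P s))).ne
    have hhalf : c / 2 < c := ENNReal.half_lt_self hc0.ne' hctop
    obtain ⟨v, hv, hvlt⟩ : ∃ v : Set Ω, (v ⊆ s \ A ∧ MeasurableSet v ∧ P A + P v ≤ r) ∧
        c / 2 < P v := by
      by_contra hcon
      push_neg at hcon
      have : c ≤ c / 2 := iSup₂_le fun v hv => hcon v hv
      exact absurd this (not_le.mpr hhalf)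
    refine ⟨v, hv.1, hv.2.1, hv.2.2, fun w hw1 hw2 hw3 => ?_⟩
    have hwc : P w ≤ c := le_iSup₂ (f := fun v _ => P v) w ⟨hw1, hw2, hw3⟩
    calc P w ≤ c := hwc
      _ = 2 * (c / 2) := (ENNReal.mul_div_cancel' (by norm_num) (by norm_num)).symm
      _ ≤ 2 * P v := mul_le_mul_right hvlt.le 2
  choose u hu1 hu2 hu3 hu4 using key
  let step : T → T := fun A => ⟨A.1 ∪ u A, Set.union_subset A.2.1 ((hu1 A).trans Set.diff_subset),
    A.2.2.1.union (hu2 A), le_trans (measure_union_le _ _) (hu3 A)⟩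
  let f : ℕ → T := fun n => step^[n] ⟨∅, Set.empty_subset s, MeasurableSet.empty, by simp⟩
  have hfsucc : ∀ n, f (n + 1) = step (f n) := fun n => Function.iterate_succ_apply' _ _ _
  have hdisj : ∀ A : T, Disjoint A.1 (u A) := fun A =>
    Set.disjoint_of_subset_right (hu1 A) Set.disjoint_sdiff_right
  have hPsucc : ∀ n, P (f (n + 1)).1 = P (f n).1 + P (u (f n)) := by
    intro n
    rw [hfsucc n]
    exact measure_union (hdisj (f n)) (hu2 (f n))
  have hmono : Monotone fun n => (f n).1 := by
    apply monotone_nat_of_le_succ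
    intro n
    rw [hfsucc n]
    exact Set.subset_union_left
  set A := ⋃ n, (f n).1 with hA
  have hAs : A ⊆ s := Set.iUnion_subset fun n => (f n).2.1
  have hAm : MeasurableSet A := MeasurableSet.iUnion fun n => (f n).2.2.1
  have hPA : P A = ⨆ n, P (f n).1 := Directed.measure_iUnion (hmono.directed_le)
  have hAr : P A ≤ r := by
    rw [hPA]; exact iSup_le fun n => (f n).2.2.2
  rcases eq_or_lt_of_le hAr with heq | hlt
  · exact ⟨A, hAs, hAm, heq⟩
  -- contradiction in this case
  exfalso
  have hsA : 0 < P (s \ A) := by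
    rw [measure_diff hAs hAm.nullMeasurableSet (measure_ne_top P A)]
    exact tsub_pos_of_lt (lt_of_lt_of_le hlt hr)
  obtain ⟨w, hw1, hw2, hw3, hw4⟩ := small' hP (hs.diff hAm) hsA (tsub_pos_of_lt hlt)
  have hwn : ∀ n, P w / 2 ≤ P (u (f n)) := by
    intro n
    have hsub : w ⊆ s \ (f n).1 :=
      hw1.trans (Set.diff_subset_diff_right (Set.subset_iUnion (fun n => (f n).1) n))
    have hle : P (f n).1 + P w ≤ r := by
      calc P (f n).1 + P w ≤ P A + (r - P A) := add_le_add
            (measure_mono (Set.subset_iUnion (fun n => (f n).1) n)) hw4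
        _ = r := add_tsub_cancel_of_le hlt.le
    have := hu4 (f n) w hsub hw2 hle
    rwa [ENNReal.div_le_iff (by norm_num) (by norm_num), mul_comm]
  have hgrow : ∀ n : ℕ, (n : ℝ≥0∞) * (P w / 2) ≤ P (f n).1 := by
    intro n
    induction n with
    | zero => simp
    | succ n ih =>
      rw [hPsucc n]
      push_cast
      rw [add_mul, one_mul]
      exact add_le_add ih (hwn n)
  obtain ⟨n, hn⟩ : ∃ n : ℕ, r < n * (P w / 2) := by
    have hw0 : P w / 2 ≠ 0 := by
      simp only [ne_eq, ENNReal.div_eq_zero_iff]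
      push_neg
      exact ⟨hw3.ne', by norm_num⟩
    exact ENNReal.exists_nat_mul_gt hw0 hrtop
  exact absurd ((hgrow n).trans (f n).2.2.2) (not_le.mpr hn)

-- indicator identdistrib
lemma identDistrib_indicator {A B : Set Ω} (hA : MeasurableSet A) (hB : MeasurableSet B)
    (hAB : P A = P B) :
    IdentDistrib (A.indicator (fun _ => (1:ℝ))) (B.indicator fun _ => 1) P P := by
  classical
  refine ⟨(measurable_const.indicator hA).aemeasurable,
    (measurable_const.indicator hB).aemeasurable, ?_⟩
  apply Measure.ext
  intro s hsm
  rw [Measure.map_apply (measurable_const.indicator hA) hsm,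
    Measure.map_apply (measurable_const.indicator hB) hsm]
  have hpre : ∀ C : Set Ω, C.indicator (fun _ => (1:ℝ)) ⁻¹' s =
      (if (1:ℝ) ∈ s then C else ∅) ∪ (if (0:ℝ) ∈ s then Cᶜ else ∅) := by
    intro C
    ext ω
    by_cases hω : ω ∈ C <;> simp only [Set.mem_preimage, Set.indicator_apply, hω, if_true,
      if_false, Set.mem_union] <;> split_ifs <;> simp [hω, *]
  rw [hpre, hpre]
  have hcompl : P Aᶜ = P Bᶜ := by
    rw [measure_compl hA (measure_ne_top P A), measure_compl hB (measure_ne_top P B), hAB]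
  split_ifs <;> simp [Set.union_compl_self, hAB, hcompl]

lemma integrable_of_bdd {X : Ω → ℝ} (hX : Measurable X) {C : ℝ} (hC : ∀ ω, |X ω| ≤ C) :
    Integrable X P :=
  (integrable_const C).mono' hX.aestronglyMeasurable
    (ae_of_all _ fun ω => by simpa [Real.norm_eq_abs] using hC ω)

lemma setIntegral_congr_of_measure_eq {Y : Ω → ℝ} (hY : Integrable Y P)
    (h : ∀ X X' : Ω → ℝ, Measurable X → Measurable X' →
      (∃ C : ℝ, ∀ ω, |X ω| ≤ C) → (∃ C : ℝ, ∀ ω, |X' ω| ≤ C) →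
      IdentDistrib X X' P P →
      ∫ ω, X ω * Y ω ∂P = ∫ ω, X' ω * Y ω ∂P)
    {A B : Set Ω} (hA : MeasurableSet A) (hB : MeasurableSet B) (hAB : P A = P B) :
    ∫ x in A, Y x ∂P = ∫ x in B, Y x ∂P := by
  have hbd : ∀ C : Set Ω, ∀ ω, |C.indicator (fun _ => (1:ℝ)) ω| ≤ 1 := by
    intro C ω
    by_cases hω : ω ∈ C <;> simp [Set.indicator_apply, hω]
  have hmul : ∀ C : Set Ω, MeasurableSet C →
      ∫ ω, C.indicator (fun _ => (1:ℝ)) ω * Y ω ∂P = ∫ x in C, Y x ∂P := by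
    intro C hC
    rw [← integral_indicator hC]
    congr 1
    ext ω
    by_cases hω : ω ∈ C <;> simp [Set.indicator_apply, hω]
  rw [← hmul A hA, ← hmul B hB]
  exact h _ _ (measurable_const.indicator hA) (measurable_const.indicator hB)
    ⟨1, hbd A⟩ ⟨1, hbd B⟩ (identDistrib_indicator hA hB hAB)

lemma dyadic_one (hP : Nonatomic P) {Y : Ω → ℝ} (hY : Integrable Y P)
    (h : ∀ X X' : Ω → ℝ, Measurable X → Measurable X' →
      (∃ C : ℝ, ∀ ω, |X ω| ≤ C) → (∃ C : ℝ, ∀ ω, |X' ω| ≤ C) →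
      IdentDistrib X X' P P →
      ∫ ω, X ω * Y ω ∂P = ∫ ω, X' ω * Y ω ∂P) :
    ∀ n : ℕ, ∀ A : Set Ω, MeasurableSet A → P A = ENNReal.ofReal (1/2^n) →
      ∫ x in A, Y x ∂P = (1/2^n) * ∫ ω, Y ω ∂P := by
  intro n
  induction n with
  | zero =>
    intro A hA hPA
    simp only [pow_zero, one_div, inv_one, ENNReal.ofReal_one] at hPA ⊢
    rw [one_mul, ← integral_add_compl hA hY]
    have hc : P Aᶜ = 0 := by
      rw [measure_compl hA (measure_ne_top P A), hPA, measure_univ, tsub_self]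
    rw [Measure.restrict_eq_zero.mpr hc]
    simp
  | succ n ih =>
    intro A hA hPA
    have hle : (ENNReal.ofReal (1/2^(n+1)) : ℝ≥0∞) ≤ P Aᶜ := by
      rw [measure_compl hA (measure_ne_top P A), hPA, measure_univ]
      rw [← ENNReal.ofReal_one, ← ENNReal.ofReal_sub _ (by positivity)]
      apply ENNReal.ofReal_le_ofReal
      rw [le_sub_iff_add_le]
      have h2 : (1:ℝ)/2^(n+1) ≤ 1/2 := by
        apply div_le_div_of_nonneg_left one_pos.le two_pos
        calc (2:ℝ) = 2^1 := (pow_one 2).symm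
          _ ≤ 2^(n+1) := pow_le_pow_right₀ one_le_two (Nat.le_add_left 1 n)
      linarith
    obtain ⟨B, hBA, hBm, hPB⟩ := sierpinski hP hA.compl hle
    have hdisj : Disjoint A B := Set.disjoint_of_subset_right hBA disjoint_compl_right
    have hunion : P (A ∪ B) = ENNReal.ofReal (1/2^n) := by
      rw [measure_union hdisj hBm, hPA, hPB, ← ENNReal.ofReal_add (by positivity) (by positivity)]
      congr 1
      field_simp
      ring
    have hAB : ∫ x in A, Y x ∂P = ∫ x in B, Y x ∂P :=
      setIntegral_congr_of_measure_eq hY h hA hBm (hPA.trans hPB.symm)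
    have hsum : ∫ x in A ∪ B, Y x ∂P = ∫ x in A, Y x ∂P + ∫ x in B, Y x ∂P :=
      setIntegral_union hdisj hBm hY.integrableOn hY.integrableOn
    have hih := ih (A ∪ B) (hA.union hBm) hunion
    rw [hsum, ← hAB] at hih
    have : (2:ℝ) * ∫ x in A, Y x ∂P = (1/2^n) * ∫ ω, Y ω ∂P := by linarith
    rw [show (1:ℝ)/2^(n+1) = (1/2) * (1/2^n) by field_simp; ring]
    linarith

lemma dyadic_k (hP : Nonatomic P) {Y : Ω → ℝ} (hY : Integrable Y P)
    (h : ∀ X X' : Ω → ℝ, Measurable X → Measurable X' →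
      (∃ C : ℝ, ∀ ω, |X ω| ≤ C) → (∃ C : ℝ, ∀ ω, |X' ω| ≤ C) →
      IdentDistrib X X' P P →
      ∫ ω, X ω * Y ω ∂P = ∫ ω, X' ω * Y ω ∂P) :
    ∀ k n : ℕ, ∀ A : Set Ω, MeasurableSet A → P A = ENNReal.ofReal (k/2^n) →
      ∫ x in A, Y x ∂P = (k/2^n) * ∫ ω, Y ω ∂P := by
  intro k
  induction k with
  | zero =>
    intro n A hA hPA
    simp only [Nat.cast_zero, zero_div, ENNReal.ofReal_zero] at hPA ⊢
    rw [Measure.restrict_eq_zero.mpr hPA]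
    simp
  | succ k ih =>
    intro n A hA hPA
    have hle : (ENNReal.ofReal (1/2^n) : ℝ≥0∞) ≤ P A := by
      rw [hPA]
      apply ENNReal.ofReal_le_ofReal
      apply div_le_div_of_nonneg_right _ (by positivity)
      push_cast; linarith
    obtain ⟨B, hBA, hBm, hPB⟩ := sierpinski hP hA hle
    have hdiff : P (A \ B) = ENNReal.ofReal (k/2^n) := by
      rw [measure_diff hBA hBm.nullMeasurableSet (measure_ne_top P B), hPA, hPB,
        ← ENNReal.ofReal_sub _ (by positivity)]
      congr 1
      push_cast
      field_simp
      ring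
    have hre : ∫ x in A, Y x ∂P = ∫ x in B, Y x ∂P + ∫ x in A \ B, Y x ∂P := by
      rw [← setIntegral_union Set.disjoint_sdiff_right (hA.diff hBm) hY.integrableOn hY.integrableOn,
        Set.union_diff_cancel hBA]
    rw [hre, dyadic_one hP hY h n B hBm hPB, ih n (A \ B) (hA.diff hBm) hdiff]
    push_cast
    ring

lemma abscont {Y : Ω → ℝ} (hY : Integrable Y P) {δ : ℝ} (hδ : 0 < δ) :
    ∃ ε : ℝ, 0 < ε ∧ ∀ B : Set Ω, MeasurableSet B → P B ≤ ENNReal.ofReal ε →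
      |∫ x in B, Y x ∂P| ≤ δ := by
  obtain ⟨ε, hε, hind⟩ := (memLp_one_iff_integrable.mpr hY).eLpNorm_indicator_le le_rfl
    ENNReal.one_ne_top hδ
  refine ⟨ε, hε, fun B hB hPB => ?_⟩
  have h1 := hind B hB hPB
  calc |∫ x in B, Y x ∂P| = ‖∫ x, B.indicator Y x ∂P‖ := by
        rw [integral_indicator hB, Real.norm_eq_abs]
    _ ≤ (∫⁻ x, ENNReal.ofReal ‖B.indicator Y x‖ ∂P).toReal := norm_integral_le_lintegral_norm _
    _ = (eLpNorm (B.indicator Y) 1 P).toReal := by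
        rw [eLpNorm_one_eq_lintegral_enorm]
        congr 1
        apply lintegral_congr
        intro x
        exact ofReal_norm _
    _ ≤ (ENNReal.ofReal δ).toReal := ENNReal.toReal_mono ENNReal.ofReal_ne_top h1
    _ = δ := ENNReal.toReal_ofReal hδ.le

lemma setIntegral_eq_mul (hP : Nonatomic P) {Y : Ω → ℝ} (hY : Integrable Y P)
    (h : ∀ X X' : Ω → ℝ, Measurable X → Measurable X' →
      (∃ C : ℝ, ∀ ω, |X ω| ≤ C) → (∃ C : ℝ, ∀ ω, |X' ω| ≤ C) →
      IdentDistrib X X' P P →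
      ∫ ω, X ω * Y ω ∂P = ∫ ω, X' ω * Y ω ∂P)
    {A : Set Ω} (hA : MeasurableSet A) :
    ∫ x in A, Y x ∂P = (P A).toReal * ∫ ω, Y ω ∂P := by
  set I := ∫ ω, Y ω ∂P with hI
  set t := (P A).toReal with ht
  have ht0 : 0 ≤ t := ENNReal.toReal_nonneg
  by_contra hne
  set δ := |(∫ x in A, Y x ∂P) - t * I| with hδdef
  have hδpos : 0 < δ := abs_pos.mpr (sub_ne_zero.mpr hne)
  obtain ⟨ε, hε, habs⟩ := abscont hY (show (0:ℝ) < δ/2 by linarith)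
  set M := |I| + 1 with hM
  have hMpos : 0 < M := by positivity
  obtain ⟨n, hn⟩ : ∃ n : ℕ, (1:ℝ)/2^n < min ε (δ/(2*M)) := by
    obtain ⟨n, hn⟩ := exists_pow_lt_of_lt_one (show (0:ℝ) < min ε (δ/(2*M)) by positivity)
      (show (1:ℝ)/2 < 1 by norm_num)
    exact ⟨n, by rwa [div_pow, one_pow] at hn⟩
  set k := ⌊t * 2^n⌋₊ with hk
  have hpow : (0:ℝ) < 2^n := by positivity
  have hk1 : (k:ℝ) ≤ t * 2^n := Nat.floor_le (by positivity)
  have hk2 : t * 2^n < k + 1 := Nat.lt_floor_add_one _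
  have hkle : (k:ℝ)/2^n ≤ t := by rw [div_le_iff₀ hpow]; linarith
  have htk : t - (k:ℝ)/2^n < 1/2^n := by
    rw [sub_lt_iff_lt_add, ← add_div, lt_div_iff₀ hpow]
    linarith
  have hPAofReal : P A = ENNReal.ofReal t := (ENNReal.ofReal_toReal (measure_ne_top P A)).symm
  have hrle : ENNReal.ofReal ((k:ℝ)/2^n) ≤ P A := by
    rw [hPAofReal]; exact ENNReal.ofReal_le_ofReal hkle
  obtain ⟨B, hBA, hBm, hPB⟩ := sierpinski hP hA hrle
  have hBint : ∫ x in B, Y x ∂P = ((k:ℝ)/2^n) * I := dyadic_k hP hY h k n B hBm hPB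
  have hPdiff : P (A \ B) = ENNReal.ofReal (t - (k:ℝ)/2^n) := by
    rw [measure_diff hBA hBm.nullMeasurableSet (measure_ne_top P B), hPAofReal, hPB,
      ← ENNReal.ofReal_sub _ (by positivity)]
  have hsmall : P (A \ B) ≤ ENNReal.ofReal ε := by
    rw [hPdiff]
    apply ENNReal.ofReal_le_ofReal
    have := lt_of_lt_of_le hn (min_le_left _ _)
    linarith
  have hd := habs (A \ B) (hA.diff hBm) hsmall
  have hsplit : ∫ x in A, Y x ∂P = (∫ x in B, Y x ∂P) + ∫ x in A \ B, Y x ∂P := by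
    rw [← setIntegral_union Set.disjoint_sdiff_right (hA.diff hBm) hY.integrableOn
      hY.integrableOn, Set.union_diff_cancel hBA]
  have h1 : |((k:ℝ)/2^n) * I - t * I| ≤ (1/2^n) * |I| := by
    rw [← sub_mul, abs_mul]
    apply mul_le_mul_of_nonneg_right _ (abs_nonneg I)
    rw [abs_le]
    constructor
    · rw [neg_le, neg_sub]
      linarith
    · calc (k:ℝ)/2^n - t ≤ 0 := by linarith
        _ ≤ 1/2^n := by positivity
  have h2 : (1/2^n) * |I| < δ/2 := by
    have hn2 := lt_of_lt_of_le hn (min_le_right _ _)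
    have hIM : |I| ≤ M := by rw [hM]; linarith
    have : (1/2^n) * |I| ≤ (1/2^n) * M := by
      apply mul_le_mul_of_nonneg_left hIM (by positivity)
    calc (1/2^n) * |I| ≤ (1/2^n) * M := this
      _ < (δ/(2*M)) * M := by apply mul_lt_mul_of_pos_right hn2 hMpos
      _ = δ/2 := by field_simp
  have : δ < δ := by
    calc δ = |(((k:ℝ)/2^n) * I + ∫ x in A \ B, Y x ∂P) - t * I| := by
          rw [hδdef, hsplit, hBint]
      _ ≤ |((k:ℝ)/2^n) * I - t * I| + |∫ x in A \ B, Y x ∂P| := by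
          rw [add_sub_right_comm]; exact abs_add_le _ _
      _ ≤ (1/2^n) * |I| + δ/2 := add_le_add h1 hd
      _ < δ/2 + δ/2 := by linarith
      _ = δ := by ring
  exact absurd this (lt_irrefl δ)

lemma simple_eq (hP : Nonatomic P) {Y : Ω → ℝ} (hY : Integrable Y P)
    (h : ∀ X X' : Ω → ℝ, Measurable X → Measurable X' →
      (∃ C : ℝ, ∀ ω, |X ω| ≤ C) → (∃ C : ℝ, ∀ ω, |X' ω| ≤ C) →
      IdentDistrib X X' P P →
      ∫ ω, X ω * Y ω ∂P = ∫ ω, X' ω * Y ω ∂P)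
    (g : SimpleFunc Ω ℝ) :
    ∫ ω, g ω * Y ω ∂P = (∫ ω, Y ω ∂P) * ∫ ω, g ω ∂P := by
  classical
  induction g using SimpleFunc.induction with
  | @const c s hsm =>
    have key1 : ∀ ω, s.piecewise (Function.const Ω c) (Function.const Ω 0) ω * Y ω
        = s.indicator (fun ω => c * Y ω) ω := fun ω => by
      by_cases hω : ω ∈ s <;> simp [Set.piecewise, Set.indicator_apply, hω]
    have key2 : ∀ ω, s.piecewise (Function.const Ω c) (Function.const Ω 0) ω
        = s.indicator (fun _ => c) ω := fun ω => by
      by_cases hω : ω ∈ s <;> simp [Set.piecewise, Set.indicator_apply, hω]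
    simp only [SimpleFunc.coe_piecewise, SimpleFunc.coe_const, SimpleFunc.coe_zero]
    calc ∫ ω, s.piecewise (Function.const Ω c) (Function.const Ω 0) ω * Y ω ∂P
        = ∫ ω, s.indicator (fun ω => c * Y ω) ω ∂P := integral_congr_ae (.of_forall key1)
      _ = ∫ x in s, c * Y x ∂P := integral_indicator hsm
      _ = c * ∫ x in s, Y x ∂P := integral_const_mul c _
      _ = c * ((P s).toReal * ∫ ω, Y ω ∂P) := by rw [setIntegral_eq_mul hP hY h hsm]
      _ = (∫ ω, Y ω ∂P) * ((P s).toReal • c) := by rw [smul_eq_mul]; ring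
      _ = (∫ ω, Y ω ∂P) * ∫ ω, s.indicator (fun _ => c) ω ∂P := by
          rw [integral_indicator_const c hsm, measureReal_def]
      _ = (∫ ω, Y ω ∂P) * ∫ ω, s.piecewise (Function.const Ω c) (Function.const Ω 0) ω ∂P := by
          rw [integral_congr_ae (.of_forall key2)]
  | @add f g hdisj hf hg =>
    have hfY : Integrable (fun ω => f ω * Y ω) P := by
      obtain ⟨C, hC⟩ := f.exists_forall_norm_le
      exact hY.bdd_mul f.measurable.aestronglyMeasurable (ae_of_all _ hC)
    have hgY : Integrable (fun ω => g ω * Y ω) P := by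
      obtain ⟨C, hC⟩ := g.exists_forall_norm_le
      exact hY.bdd_mul g.measurable.aestronglyMeasurable (ae_of_all _ hC)
    have hfint : Integrable f P := by
      obtain ⟨C, hC⟩ := f.exists_forall_norm_le
      exact integrable_of_bdd f.measurable (C := C) fun ω => by
        simpa [Real.norm_eq_abs] using hC ω
    have hgint : Integrable g P := by
      obtain ⟨C, hC⟩ := g.exists_forall_norm_le
      exact integrable_of_bdd g.measurable (C := C) fun ω => by
        simpa [Real.norm_eq_abs] using hC ω
    simp only [SimpleFunc.coe_add, Pi.add_apply]
    rw [show (fun ω => (f ω + g ω) * Y ω) = fun ω => f ω * Y ω + g ω * Y ω from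
      funext fun ω => by ring] at *
    rw [integral_add hfY hgY, integral_add hfint hgint, hf, hg]
    ring

theorem final (hP : Nonatomic P) {Y : Ω → ℝ} (hY : Integrable Y P)
    (h : ∀ X X' : Ω → ℝ, Measurable X → Measurable X' →
      (∃ C : ℝ, ∀ ω, |X ω| ≤ C) → (∃ C : ℝ, ∀ ω, |X' ω| ≤ C) →
      IdentDistrib X X' P P →
      ∫ ω, X ω * Y ω ∂P = ∫ ω, X' ω * Y ω ∂P) :
    ∀ X : Ω → ℝ, Measurable X → (∃ C : ℝ, ∀ ω, |X ω| ≤ C) →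
      ∫ ω, X ω * Y ω ∂P = (∫ ω, Y ω ∂P) * ∫ ω, X ω ∂P := by
  rintro X hX ⟨C, hC⟩
  set I := ∫ ω, Y ω ∂P with hI
  set fn : ℕ → SimpleFunc Ω ℝ := fun n => SimpleFunc.approxOn X hX Set.univ 0 (Set.mem_univ 0) n
    with hfn
  have htend : ∀ ω, Filter.Tendsto (fun n => fn n ω) Filter.atTop (nhds (X ω)) := fun ω =>
    SimpleFunc.tendsto_approxOn hX (Set.mem_univ 0) (by simp)
  have hbound : ∀ n ω, ‖fn n ω‖ ≤ ‖X ω‖ + ‖X ω‖ := fun n ω =>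
    SimpleFunc.norm_approxOn_zero_le hX (Set.mem_univ 0) ω n
  have hXint : Integrable X P := integrable_of_bdd hX hC
  have hbound2 : ∀ n ω, ‖fn n ω‖ ≤ 2 * C := by
    intro n ω
    calc ‖fn n ω‖ ≤ ‖X ω‖ + ‖X ω‖ := hbound n ω
      _ ≤ 2 * C := by
        have := hC ω
        rw [Real.norm_eq_abs]
        linarith
  have t1 : Filter.Tendsto (fun n => ∫ ω, fn n ω * Y ω ∂P) Filter.atTop
      (nhds (∫ ω, X ω * Y ω ∂P)) := by
    apply tendsto_integral_of_dominated_convergence (fun ω => (2*C) * |Y ω|)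
    · exact fun n => ((fn n).measurable.aestronglyMeasurable).mul hY.aestronglyMeasurable
    · exact hY.abs.const_mul (2*C)
    · intro n
      apply Filter.Eventually.of_forall
      intro ω
      rw [norm_mul]
      apply mul_le_mul_of_nonneg_right (hbound2 n ω) (norm_nonneg _) |>.trans
      rw [Real.norm_eq_abs]
    · exact Filter.Eventually.of_forall fun ω => (htend ω).mul tendsto_const_nhds
  have t2 : Filter.Tendsto (fun n => ∫ ω, fn n ω ∂P) Filter.atTop (nhds (∫ ω, X ω ∂P)) := by
    apply tendsto_integral_of_dominated_convergence (fun _ => 2*C)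
    · exact fun n => (fn n).measurable.aestronglyMeasurable
    · exact integrable_const _
    · exact fun n => Filter.Eventually.of_forall fun ω => hbound2 n ω
    · exact Filter.Eventually.of_forall htend
  have heq : ∀ n, ∫ ω, fn n ω * Y ω ∂P = I * ∫ ω, fn n ω ∂P := fun n =>
    simple_eq hP hY h (fn n)
  have t3 : Filter.Tendsto (fun n => ∫ ω, fn n ω * Y ω ∂P) Filter.atTop
      (nhds (I * ∫ ω, X ω ∂P)) := by
    rw [show (fun n => ∫ ω, fn n ω * Y ω ∂P) = fun n => I * ∫ ω, fn n ω ∂P from funext heq]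
    exact t2.const_mul I
  exact tendsto_nhds_unique t1 t3

end Aux

/-- If the functional `X ↦ E[XY]` is law invariant on bounded measurable random variables,
then it collapses to the mean: `E[XY] = E[Y]·E[X]`. -/
theorem collapse_to_mean_of_lawInvariant_pairing
    {Ω : Type*} [MeasurableSpace Ω] (P : Measure Ω) [IsProbabilityMeasure P]
    (hP : Nonatomic P) (Y : Ω → ℝ) (hY : Integrable Y P)
    (h : ∀ X X' : Ω → ℝ, Measurable X → Measurable X' →
      (∃ C : ℝ, ∀ ω, |X ω| ≤ C) → (∃ C : ℝ, ∀ ω, |X' ω| ≤ C) →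
      IdentDistrib X X' P P →
      ∫ ω, X ω * Y ω ∂P = ∫ ω, X' ω * Y ω ∂P) :
    ∀ X : Ω → ℝ, Measurable X → (∃ C : ℝ, ∀ ω, |X ω| ≤ C) →
      ∫ ω, X ω * Y ω ∂P = (∫ ω, Y ω ∂P) * ∫ ω, X ω ∂P :=
  final hP hY h
end

section
/- Let (Ω, F, P) be a non-atomic probability space, let m ≥ 1 be a natural number, and let A ∈ F be a measurable set with P(A) ≤ 1/m. Let S denote the linear span (over ℝ) of { U − V : U, V ∈ L^∞(P), U ~ V } inside L^∞(P). Then the distance in the essential supremum norm from 1_A − P(A)·1 to S is at most 2/m. -/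
open MeasureTheory ProbabilityTheory
open scoped ENNReal

section Aux

variable {Ω : Type*} [MeasurableSpace Ω] {P : Measure Ω}

lemma Nonatomic.exists_le_half [IsFiniteMeasure P] (hP : Nonatomic P) {s : Set Ω}
    (hs : MeasurableSet s) (h0 : 0 < P s) :
    ∃ t, t ⊆ s ∧ MeasurableSet t ∧ 0 < P t ∧ P t ≤ P s / 2 := by
  obtain ⟨t, hts, htm, ht0, htlt⟩ := hP s hs h0
  by_cases h : P t ≤ P s / 2
  · exact ⟨t, hts, htm, ht0, h⟩
  · push_neg at h
    have hd : P (s \ t) = P s - P t := measure_diff hts htm.nullMeasurableSet (measure_ne_top P t)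
    refine ⟨s \ t, Set.diff_subset, hs.diff htm, ?_, ?_⟩
    · rw [hd]
      exact tsub_pos_iff_lt.mpr htlt
    · rw [hd, tsub_le_iff_right]
      calc P s = P s / 2 + P s / 2 := (ENNReal.add_halves _).symm
        _ ≤ P s / 2 + P t := add_le_add_right h.le _

lemma Nonatomic.exists_le_pow [IsFiniteMeasure P] (hP : Nonatomic P) {s : Set Ω}
    (hs : MeasurableSet s) (h0 : 0 < P s) (n : ℕ) :
    ∃ t, t ⊆ s ∧ MeasurableSet t ∧ 0 < P t ∧ P t ≤ P s * 2⁻¹ ^ n := by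
  induction n with
  | zero => exact ⟨s, subset_rfl, hs, h0, by simp⟩
  | succ n ih =>
    obtain ⟨t, hts, htm, ht0, hle⟩ := ih
    obtain ⟨t', h1, h2, h3, h4⟩ := hP.exists_le_half htm ht0
    refine ⟨t', h1.trans hts, h2, h3, ?_⟩
    calc P t' ≤ P t / 2 := h4
      _ ≤ (P s * 2⁻¹ ^ n) / 2 := ENNReal.div_le_div_right hle 2
      _ = P s * 2⁻¹ ^ (n + 1) := by
          rw [pow_succ, div_eq_mul_inv, mul_assoc]

lemma Nonatomic.exists_small [IsFiniteMeasure P] (hP : Nonatomic P) {s : Set Ω}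
    (hs : MeasurableSet s) (h0 : 0 < P s) {ε : ℝ≥0∞} (hε : ε ≠ 0) :
    ∃ t, t ⊆ s ∧ MeasurableSet t ∧ 0 < P t ∧ P t ≤ ε := by
  by_cases h : P s ≤ ε
  · exact ⟨s, subset_rfl, hs, h0, h⟩
  push_neg at h
  have hs0 : P s ≠ 0 := h0.ne'
  have hst : P s ≠ ⊤ := measure_ne_top P s
  obtain ⟨n, hn⟩ := ENNReal.exists_inv_two_pow_lt (ENNReal.div_pos hε hst).ne'
  obtain ⟨t, h1, h2, h3, h4⟩ := hP.exists_le_pow hs h0 n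
  refine ⟨t, h1, h2, h3, ?_⟩
  calc P t ≤ P s * 2⁻¹ ^ n := h4
    _ ≤ P s * (ε / P s) := mul_le_mul_right hn.le _
    _ = ε := ENNReal.mul_div_cancel hs0 hst

/-- Sierpiński/Darboux property of nonatomic finite measures. -/
theorem Nonatomic.exists_measure_eq [IsFiniteMeasure P] (hP : Nonatomic P) {s : Set Ω}
    (hs : MeasurableSet s) {r : ℝ≥0∞} (hr : r ≤ P s) :
    ∃ t, t ⊆ s ∧ MeasurableSet t ∧ P t = r := by
  classical
  have hrt : r ≠ ⊤ := (hr.trans_lt (measure_lt_top P s)).ne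
  set S : Set Ω → Set ℝ≥0∞ :=
    fun t => {x | ∃ u, u ⊆ s \ t ∧ MeasurableSet u ∧ P t + P u ≤ r ∧ x = P u} with hS
  have hstep : ∀ t : Set Ω, ∃ u, u ⊆ s \ t ∧ MeasurableSet u ∧
      (P t ≤ r → P t + P u ≤ r) ∧ sSup (S t) / 2 ≤ P u := by
    intro t
    by_cases h : sSup (S t) = 0
    · exact ⟨∅, by simp, MeasurableSet.empty, fun h' => by simpa using h', by simp [h]⟩
    · have hub : ∀ x ∈ S t, x ≤ r := by
        rintro x ⟨u, -, -, hu, rfl⟩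
        exact le_trans (le_add_self) hu
      have hne : sSup (S t) ≠ ⊤ := ((sSup_le hub).trans_lt hrt.lt_top).ne
      have hlt : sSup (S t) / 2 < sSup (S t) := ENNReal.half_lt_self h hne
      obtain ⟨x, hx, hxlt⟩ := lt_sSup_iff.mp hlt
      obtain ⟨u, h1, h2, h3, rfl⟩ := hx
      exact ⟨u, h1, h2, fun _ => h3, hxlt.le⟩
  choose u hu1 hu2 hu3 hu4 using hstep
  set f : ℕ → Set Ω := fun n => Nat.rec ∅ (fun _ t => t ∪ u t) n with hf
  have hfs : ∀ n, f (n + 1) = f n ∪ u (f n) := fun n => rfl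
  have key : ∀ n, f n ⊆ s ∧ MeasurableSet (f n) ∧ P (f n) ≤ r := by
    intro n
    induction n with
    | zero => exact ⟨by simp [hf], MeasurableSet.empty, by simp [hf]⟩
    | succ n ih =>
      obtain ⟨h1, h2, h3⟩ := ih
      refine ⟨?_, h2.union (hu2 _), ?_⟩
      · rw [hfs]
        exact Set.union_subset h1 ((hu1 _).trans Set.diff_subset)
      · rw [hfs]
        exact le_trans (measure_union_le _ _) (hu3 _ h3)
  set t := ⋃ n, f n with ht
  have hmono : Monotone f :=
    monotone_nat_of_le_succ (fun n => by rw [hfs]; exact Set.subset_union_left)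
  have hPt : P t = ⨆ n, P (f n) := hmono.directed_le.measure_iUnion
  have htP : P t ≤ r := hPt ▸ iSup_le fun n => (key n).2.2
  have hts : t ⊆ s := Set.iUnion_subset fun n => (key n).1
  have htm : MeasurableSet t := MeasurableSet.iUnion fun n => (key n).2.1
  refine ⟨t, hts, htm, ?_⟩
  by_contra hne
  have hlt : P t < r := lt_of_le_of_ne htP hne
  have hsd : 0 < P (s \ t) := by
    rw [measure_diff hts htm.nullMeasurableSet (measure_ne_top P t)]
    exact tsub_pos_iff_lt.mpr (hlt.trans_le hr)
  obtain ⟨v, hv1, hv2, hv3, hv4⟩ :=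
    hP.exists_small (hs.diff htm) hsd (ε := r - P t) (tsub_pos_iff_lt.mpr hlt).ne'
  have hvS : ∀ n, P v ∈ S (f n) := by
    intro n
    refine ⟨v, hv1.trans (Set.diff_subset_diff_right (Set.subset_iUnion f n)), hv2, ?_, rfl⟩
    calc P (f n) + P v ≤ P t + (r - P t) :=
          add_le_add (by rw [hPt]; exact le_iSup (fun k => P (f k)) n) hv4
      _ = r := add_tsub_cancel_of_le hlt.le
  have hvub : ∀ n, P v / 2 ≤ P (u (f n)) := fun n =>
    le_trans (ENNReal.div_le_div_right (le_sSup (hvS n)) 2) (hu4 _)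
  have hgrow : ∀ n : ℕ, (n : ℝ≥0∞) * (P v / 2) ≤ P (f n) := by
    intro n
    induction n with
    | zero => simp
    | succ n ih =>
      have hdisj : Disjoint (f n) (u (f n)) :=
        Set.disjoint_of_subset_right (hu1 _) Set.disjoint_sdiff_right
      have hPun : P (f (n + 1)) = P (f n) + P (u (f n)) := by
        rw [hfs]; exact measure_union hdisj (hu2 _)
      calc ((n + 1 : ℕ) : ℝ≥0∞) * (P v / 2) = (n : ℝ≥0∞) * (P v / 2) + P v / 2 := by
            push_cast; ring
        _ ≤ P (f n) + P (u (f n)) := add_le_add ih (hvub n)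
        _ = P (f (n + 1)) := hPun.symm
  have hc0 : P v / 2 ≠ 0 := (ENNReal.half_pos hv3.ne').ne'
  have hct : P v / 2 ≠ ⊤ :=
    (ENNReal.div_lt_top (measure_ne_top P v) (by norm_num)).ne
  obtain ⟨N, hN⟩ := ENNReal.exists_nat_gt (ENNReal.div_lt_top hrt hc0).ne
  have hrN : r < (N : ℝ≥0∞) * (P v / 2) :=
    (ENNReal.div_lt_iff (Or.inl hc0) (Or.inl hct)).mp hN
  exact absurd (le_trans (hgrow N) (key N).2.2) (not_le.mpr hrN)

lemma map_indicator_const_eq [IsProbabilityMeasure P] {B B' : Set Ω} (hB : MeasurableSet B)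
    (hB' : MeasurableSet B') (h : P B = P B') :
    P.map (B.indicator fun _ => (1 : ℝ)) = P.map (B'.indicator fun _ => (1 : ℝ)) := by
  classical
  have mB : Measurable (B.indicator fun _ => (1 : ℝ)) := measurable_const.indicator hB
  have mB' : Measurable (B'.indicator fun _ => (1 : ℝ)) := measurable_const.indicator hB'
  have hcompl : P Bᶜ = P B'ᶜ := by
    rw [prob_compl_eq_one_sub hB, prob_compl_eq_one_sub hB', h]
  ext s hs
  rw [Measure.map_apply mB hs, Measure.map_apply mB' hs,
    Set.indicator_const_preimage_eq_union, Set.indicator_const_preimage_eq_union]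
  split_ifs with h1 h0 <;>
    simp [Set.union_compl_self, h, hcompl]

lemma exists_disjoint_family [IsProbabilityMeasure P] (hP : Nonatomic P) (r : ℝ≥0∞) :
    ∀ n : ℕ, (n : ℝ≥0∞) * r ≤ 1 →
    ∃ C : ℕ → Set Ω, (∀ i, MeasurableSet (C i)) ∧ (∀ i < n, P (C i) = r) ∧
      (∀ i, n ≤ i → C i = ∅) ∧ Pairwise (Function.onFun Disjoint C) := by
  intro n
  induction n with
  | zero =>
    exact fun _ => ⟨fun _ => ∅, fun _ => MeasurableSet.empty,
      fun i h => absurd h (Nat.not_lt_zero i), fun _ _ => rfl, fun i j _ => by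
        simp [Function.onFun]⟩
  | succ n ih =>
    intro hle
    have hmono : (n : ℝ≥0∞) * r ≤ ((n + 1 : ℕ) : ℝ≥0∞) * r := by
      gcongr
      exact_mod_cast Nat.le_succ n
    obtain ⟨C, hCm, hCr, hCe, hCd⟩ := ih (hmono.trans hle)
    set T := ⋃ i ∈ Finset.range n, C i with hT
    have hTm : MeasurableSet T := (Finset.range n).measurableSet_biUnion fun i _ => hCm i
    have hTle : P T ≤ (n : ℝ≥0∞) * r := by
      refine le_trans (measure_biUnion_finset_le _ _) ?_
      rw [Finset.sum_congr rfl fun i hi => hCr i (Finset.mem_range.mp hi)]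
      simp [mul_comm]
    have hTc : r ≤ P Tᶜ := by
      rw [prob_compl_eq_one_sub hTm,
        (ENNReal.cancel_of_ne (measure_ne_top P T)).le_tsub_iff_right prob_le_one]
      calc r + P T ≤ r + (n : ℝ≥0∞) * r := add_le_add_right hTle r
        _ = ((n + 1 : ℕ) : ℝ≥0∞) * r := by push_cast; ring
        _ ≤ 1 := hle
    obtain ⟨D, hD1, hD2, hD3⟩ := hP.exists_measure_eq hTm.compl hTc
    have hDC : ∀ j, j ≠ n → Disjoint D (C j) := by
      intro j hj
      rcases lt_or_ge j n with hjn | hjn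
      · refine Set.disjoint_of_subset hD1 ?_ disjoint_compl_left
        exact Set.subset_biUnion_of_mem (Finset.mem_range.mpr hjn)
      · rw [hCe j hjn]
        exact disjoint_bot_right
    refine ⟨Function.update C n D, ?_, ?_, ?_, ?_⟩
    · intro i
      rcases eq_or_ne i n with rfl | hi
      · simpa using hD2
      · simpa [Function.update_of_ne hi] using hCm i
    · intro i hi
      rcases eq_or_ne i n with rfl | hine
      · simp [hD3]
      · have : i < n := lt_of_le_of_ne (Nat.lt_succ_iff.mp hi) hine
        simpa [Function.update_of_ne hine] using hCr i this
    · intro i hi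
      have hine : i ≠ n := by omega
      rw [Function.update_of_ne hine]
      exact hCe i (by omega)
    · intro i j hij
      unfold Function.onFun
      rcases eq_or_ne i n with rfl | hi
      · rw [Function.update_self, Function.update_of_ne (Ne.symm hij)]
        exact hDC j (Ne.symm hij)
      · rcases eq_or_ne j n with rfl | hj
        · rw [Function.update_self, Function.update_of_ne hi]
          exact (hDC i hi).symm
        · rw [Function.update_of_ne hi, Function.update_of_ne hj]
          exact hCd hij

lemma Lp_coeFn_sum {p : ℝ≥0∞} {ι : Type*} (s : Finset ι) (f : ι → Lp ℝ p P) :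
    ⇑(∑ i ∈ s, f i) =ᵐ[P] fun ω => ∑ i ∈ s, f i ω := by
  classical
  induction s using Finset.induction with
  | empty => simp only [Finset.sum_empty]; exact Lp.coeFn_zero ℝ p P
  | @insert a s ha ih =>
    rw [Finset.sum_insert ha]
    filter_upwards [Lp.coeFn_add (f a) (∑ i ∈ s, f i), ih] with ω h1 h2
    simp only [h1, Pi.add_apply, h2, Finset.sum_insert ha]

end Aux

/-- If `P(A) ≤ 1/m`, then the distance in `L^∞` from `1_A - P(A)·1` to the span of
differences of identically distributed elements is at most `2/m`. -/
theorem dist_indicator_sub_const_span_le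
    {Ω : Type*} [MeasurableSpace Ω] (P : Measure Ω) [IsProbabilityMeasure P]
    (hP : Nonatomic P) (m : ℕ) (hm : 1 ≤ m)
    (A : Set Ω) (hA : MeasurableSet A) (hPA : P A ≤ 1 / (m : ℝ≥0∞)) :
    Metric.infDist
        (indicatorConstLp ⊤ hA (measure_ne_top P A) (1 : ℝ)
          - (P A).toReal • Lp.const ⊤ P (1 : ℝ))
        ((Submodule.span ℝ {W : Lp ℝ ⊤ P |
          ∃ U V : Lp ℝ ⊤ P, IdentDistrib (U : Ω → ℝ) (V : Ω → ℝ) P P ∧ W = U - V} :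
            Submodule ℝ (Lp ℝ ⊤ P)) : Set (Lp ℝ ⊤ P))
      ≤ 2 / (m : ℝ) := by
  classical
  have hm0 : (m : ℝ≥0∞) ≠ 0 := by exact_mod_cast Nat.pos_of_ne_zero (by omega) |>.ne'
  have hmt : (m : ℝ≥0∞) ≠ ⊤ := ENNReal.natCast_ne_top m
  have hmPA : (m : ℝ≥0∞) * P A ≤ 1 := by
    calc (m : ℝ≥0∞) * P A ≤ (m : ℝ≥0∞) * (1 / (m : ℝ≥0∞)) := mul_le_mul_right hPA _
      _ = 1 := ENNReal.mul_div_cancel hm0 hmt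
  obtain ⟨C, hCm, hCr, hCe, hCd⟩ := exists_disjoint_family hP (P A) m hmPA
  set x : Lp ℝ ⊤ P := indicatorConstLp ⊤ hA (measure_ne_top P A) (1 : ℝ) with hx
  set y : ℕ → Lp ℝ ⊤ P :=
    fun i => indicatorConstLp ⊤ (hCm i) (measure_ne_top P (C i)) (1 : ℝ) with hy
  set c : ℝ := (P A).toReal with hc
  -- identical distribution
  have hid : ∀ i < m, IdentDistrib (x : Ω → ℝ) (y i : Ω → ℝ) P P := by
    intro i hi
    refine ⟨(Lp.aestronglyMeasurable x).aemeasurable,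
      (Lp.aestronglyMeasurable (y i)).aemeasurable, ?_⟩
    rw [Measure.map_congr (μ := P) indicatorConstLp_coeFn,
      Measure.map_congr (μ := P) indicatorConstLp_coeFn]
    exact map_indicator_const_eq hA (hCm i) (hCr i hi).symm
  set W : Lp ℝ ⊤ P := x - (m : ℝ)⁻¹ • ∑ i ∈ Finset.range m, y i with hW
  have hmR : (m : ℝ) ≠ 0 := by positivity
  have hWmem : W ∈ (Submodule.span ℝ {W : Lp ℝ ⊤ P |
      ∃ U V : Lp ℝ ⊤ P, IdentDistrib (U : Ω → ℝ) (V : Ω → ℝ) P P ∧ W = U - V} :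
        Submodule ℝ (Lp ℝ ⊤ P)) := by
    have hrepr : W = (m : ℝ)⁻¹ • ∑ i ∈ Finset.range m, (x - y i) := by
      rw [hW, Finset.sum_sub_distrib, smul_sub, Finset.sum_const, Finset.card_range,
        ← Nat.cast_smul_eq_nsmul ℝ, smul_smul, inv_mul_cancel₀ hmR, one_smul]
    rw [hrepr]
    refine Submodule.smul_mem _ _ (Submodule.sum_mem _ fun i hi => Submodule.subset_span ?_)
    exact ⟨x, y i, hid i (Finset.mem_range.mp hi), rfl⟩
  refine le_trans (Metric.infDist_le_dist_of_mem hWmem) ?_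
  rw [dist_eq_norm]
  have hdiff : x - c • Lp.const ⊤ P (1 : ℝ) - W
      = (m : ℝ)⁻¹ • ∑ i ∈ Finset.range m, y i - c • Lp.const ⊤ P (1 : ℝ) := by
    rw [hW]; abel
  rw [hdiff]
  -- the a.e. bound
  have hcle : c ≤ (m : ℝ)⁻¹ := by
    rw [hc]
    have h1 : (1 / (m : ℝ≥0∞)).toReal = (m : ℝ)⁻¹ := by
      rw [ENNReal.toReal_div]
      simp [one_div]
    calc (P A).toReal ≤ (1 / (m : ℝ≥0∞)).toReal :=
          ENNReal.toReal_mono (ENNReal.div_lt_top ENNReal.one_ne_top hm0).ne hPA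
      _ = (m : ℝ)⁻¹ := h1
  have hc0 : 0 ≤ c := ENNReal.toReal_nonneg
  have hbound : ∀ᵐ ω ∂P,
      ‖((m : ℝ)⁻¹ • ∑ i ∈ Finset.range m, y i - c • Lp.const ⊤ P (1 : ℝ) : Lp ℝ ⊤ P) ω‖
        ≤ 2 / (m : ℝ) := by
    have hyi : ∀ᵐ ω ∂P, ∀ i, (y i : Ω → ℝ) ω = (C i).indicator (fun _ => (1 : ℝ)) ω :=
      ae_all_iff.mpr fun i => indicatorConstLp_coeFn
    filter_upwards [Lp.coeFn_sub ((m : ℝ)⁻¹ • ∑ i ∈ Finset.range m, y i)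
        (c • Lp.const ⊤ P (1 : ℝ)),
      Lp.coeFn_smul (m : ℝ)⁻¹ (∑ i ∈ Finset.range m, y i),
      Lp.coeFn_smul c (Lp.const ⊤ P (1 : ℝ)),
      Lp.coeFn_const (p := ⊤) (μ := P) (1 : ℝ),
      Lp_coeFn_sum (Finset.range m) y, hyi] with ω h1 h2 h3 h4 h5 h6
    have hsum0 : 0 ≤ ∑ i ∈ Finset.range m, (C i).indicator (fun _ => (1 : ℝ)) ω :=
      Finset.sum_nonneg fun i _ => Set.indicator_nonneg (fun _ _ => zero_le_one) ω
    have hsum1 : ∑ i ∈ Finset.range m, (C i).indicator (fun _ => (1 : ℝ)) ω ≤ 1 := by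
      by_cases h : ∃ i ∈ Finset.range m, ω ∈ C i
      · obtain ⟨i₀, hi₀, hω⟩ := h
        rw [Finset.sum_eq_single_of_mem i₀ hi₀ ?_]
        · simp [Set.indicator_of_mem hω]
        · intro j _ hne
          have hdisj : Disjoint (C j) (C i₀) := hCd hne
          have hωj : ω ∉ C j := fun hcj => (Set.disjoint_left.mp hdisj hcj) hω
          simp [Set.indicator_of_notMem hωj]
      · push_neg at h
        rw [Finset.sum_eq_zero fun j hj => Set.indicator_of_notMem (h j hj) _]
        norm_num
    rw [h1, Pi.sub_apply, h2, h3, Pi.smul_apply, Pi.smul_apply, h4, h5]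
    simp only [smul_eq_mul, Function.const_apply]
    have hS : ∑ i ∈ Finset.range m, (y i : Ω → ℝ) ω
        = ∑ i ∈ Finset.range m, (C i).indicator (fun _ => (1 : ℝ)) ω :=
      Finset.sum_congr rfl fun i _ => h6 i
    rw [hS]
    set S := ∑ i ∈ Finset.range m, (C i).indicator (fun _ => (1 : ℝ)) ω
    have hminv : 0 ≤ (m : ℝ)⁻¹ := by positivity
    calc ‖(m : ℝ)⁻¹ * S - c * 1‖ ≤ ‖(m : ℝ)⁻¹ * S‖ + ‖c * 1‖ := norm_sub_le _ _
      _ = (m : ℝ)⁻¹ * S + c := by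
          rw [Real.norm_eq_abs, Real.norm_eq_abs, abs_of_nonneg (by positivity),
            abs_of_nonneg (by simpa using hc0)]
          ring
      _ ≤ (m : ℝ)⁻¹ * 1 + (m : ℝ)⁻¹ := by
          gcongr
      _ = 2 / (m : ℝ) := by ring
  have := Lp.norm_le_of_ae_bound (μ := P)
    (f := ((m : ℝ)⁻¹ • ∑ i ∈ Finset.range m, y i - c • Lp.const ⊤ P (1 : ℝ) : Lp ℝ ⊤ P))
    (C := 2 / (m : ℝ)) (by positivity) hbound
  simpa [measureUnivNNReal, measure_univ] using this
end

section
/- Let (Ω, F, P) be a non-atomic probability space, let 1 ≤ p < ∞, and let S denote the linear span (over ℝ) of { U − V : U, V ∈ L^p(P), U ~ V } inside L^p(P). Then for every X ∈ L^p(P), the element X − E[X]·1 belongs to the closure of S in the L^p norm. -/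
open MeasureTheory ProbabilityTheory
open scoped ENNReal

set_option linter.unusedSectionVars false

section MeasureLemmas

variable {Ω : Type*} [MeasurableSpace Ω] (P : Measure Ω) [IsProbabilityMeasure P]

lemma sms_half (hP : Nonatomic P) {s : Set Ω} (hs : MeasurableSet s) (h : 0 < P s) :
    ∃ t, t ⊆ s ∧ MeasurableSet t ∧ 0 < P t ∧ P t ≤ P s / 2 := by
  obtain ⟨t, hts, htm, ht0, htlt⟩ := hP s hs h
  by_cases hc : P t ≤ P s / 2
  · exact ⟨t, hts, htm, ht0, hc⟩
  push_neg at hc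
  have hdiff : P (s \ t) = P s - P t :=
    measure_diff hts htm.nullMeasurableSet (measure_ne_top P t)
  refine ⟨s \ t, Set.diff_subset, hs.diff htm, ?_, ?_⟩
  · rw [hdiff]; exact tsub_pos_of_lt htlt
  · rw [hdiff]
    calc P s - P t ≤ P s - P s / 2 := tsub_le_tsub_left hc.le _
    _ = P s / 2 := ENNReal.sub_half (measure_ne_top P s)

lemma sms_small (hP : Nonatomic P) {s : Set Ω} (hs : MeasurableSet s) (h : 0 < P s)
    {ε : ℝ≥0∞} (hε : 0 < ε) :
    ∃ t, t ⊆ s ∧ MeasurableSet t ∧ 0 < P t ∧ P t ≤ ε := by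
  have key : ∀ n : ℕ, ∃ t, t ⊆ s ∧ MeasurableSet t ∧ 0 < P t ∧ P t ≤ 2⁻¹ ^ n := by
    intro n
    induction n with
    | zero => exact ⟨s, le_refl _, hs, h, by simpa using prob_le_one⟩
    | succ n ih =>
      obtain ⟨t, hts, htm, ht0, hle⟩ := ih
      obtain ⟨u, hut, hum, hu0, hule⟩ := sms_half P hP htm ht0
      refine ⟨u, hut.trans hts, hum, hu0, ?_⟩
      calc P u ≤ P t / 2 := hule
      _ ≤ 2⁻¹ ^ n / 2 := by gcongr
      _ = 2⁻¹ ^ (n + 1) := by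
        rw [pow_succ, div_eq_mul_inv]
  obtain ⟨n, hn⟩ := ENNReal.exists_inv_two_pow_lt hε.ne'
  obtain ⟨t, h1, h2, h3, h4⟩ := key n
  exact ⟨t, h1, h2, h3, h4.trans hn.le⟩

lemma sms_exists_subset (hP : Nonatomic P) {s : Set Ω} (hs : MeasurableSet s)
    {t : ℝ≥0∞} (ht : t ≤ P s) : ∃ u, u ⊆ s ∧ MeasurableSet u ∧ P u = t := by
  classical
  have htfin : t ≠ ∞ := (ht.trans_lt (measure_lt_top P s)).ne
  have step : ∀ u : Set Ω, u ⊆ s → MeasurableSet u → P u ≤ t →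
      ∃ v, (v ⊆ s \ u ∧ MeasurableSet v ∧ P u + P v ≤ t) ∧
        ∀ w, w ⊆ s \ u → MeasurableSet w → P u + P w ≤ t → P w ≤ 2 * P v := by
    intro u hu hum hut
    set c := ⨆ (w : Set Ω) (_ : w ⊆ s \ u ∧ MeasurableSet w ∧ P u + P w ≤ t), P w with hc
    have hle : ∀ w, w ⊆ s \ u → MeasurableSet w → P u + P w ≤ t → P w ≤ c := fun w h1 h2 h3 =>
      le_iSup₂ (f := fun (w : Set Ω) (_ : w ⊆ s \ u ∧ MeasurableSet w ∧ P u + P w ≤ t) => P w)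
        w ⟨h1, h2, h3⟩
    by_cases hc0 : c = 0
    · refine ⟨∅, ⟨Set.empty_subset _, MeasurableSet.empty, by simpa using hut⟩, ?_⟩
      intro w h1 h2 h3
      exact (hle w h1 h2 h3).trans (by simp [hc0])
    · have hct : c ≤ t := by
        refine iSup₂_le fun w hw => ?_
        exact le_trans le_add_self hw.2.2
      have hctop : c ≠ ∞ := (hct.trans_lt htfin.lt_top).ne
      have hhalf : c / 2 < c := ENNReal.half_lt_self hc0 hctop
      rw [hc] at hhalf
      obtain ⟨w, hw2⟩ := lt_iSup_iff.1 hhalf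
      obtain ⟨hw, hcw⟩ := lt_iSup_iff.1 hw2
      refine ⟨w, hw, ?_⟩
      intro w' h1 h2 h3
      calc P w' ≤ c := hle w' h1 h2 h3
      _ = 2 * (c / 2) := (ENNReal.mul_div_cancel two_ne_zero ENNReal.ofNat_ne_top).symm
      _ ≤ 2 * P w := by exact mul_le_mul_right hcw.le 2
  let T := {u : Set Ω // u ⊆ s ∧ MeasurableSet u ∧ P u ≤ t}
  let v : T → Set Ω := fun u => (step u.1 u.2.1 u.2.2.1 u.2.2.2).choose
  have hv : ∀ u : T, ((v u ⊆ s \ u.1 ∧ MeasurableSet (v u) ∧ P u.1 + P (v u) ≤ t) ∧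
      ∀ w, w ⊆ s \ u.1 → MeasurableSet w → P u.1 + P w ≤ t → P w ≤ 2 * P (v u)) :=
    fun u => (step u.1 u.2.1 u.2.2.1 u.2.2.2).choose_spec
  have hdisj : ∀ u : T, Disjoint u.1 (v u) := fun u =>
    Set.disjoint_left.2 fun x hx hxv => ((hv u).1.1 hxv).2 hx
  have hmeasadd : ∀ u : T, P (u.1 ∪ v u) = P u.1 + P (v u) := fun u =>
    measure_union (hdisj u) (hv u).1.2.1
  let F : T → T := fun u => ⟨u.1 ∪ v u,
    Set.union_subset u.2.1 ((hv u).1.1.trans Set.diff_subset),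
    u.2.2.1.union (hv u).1.2.1,
    by rw [hmeasadd u]; exact (hv u).1.2.2⟩
  let U : ℕ → T := fun n => F^[n] ⟨∅, Set.empty_subset _, MeasurableSet.empty, by simp⟩
  have hUsucc : ∀ n, U (n + 1) = F (U n) := fun n => Function.iterate_succ_apply' F n _
  have hUmono : Monotone fun n => (U n).1 := monotone_nat_of_le_succ fun n => by
    rw [hUsucc n]; exact Set.subset_union_left
  set A := ⋃ n, (U n).1 with hA
  have hAs : A ⊆ s := Set.iUnion_subset fun n => (U n).2.1
  have hAm : MeasurableSet A := MeasurableSet.iUnion fun n => (U n).2.2.1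
  have hPA : P A = ⨆ n, P (U n).1 := hUmono.directed_le.measure_iUnion
  have hAt : P A ≤ t := by rw [hPA]; exact iSup_le fun n => (U n).2.2.2
  rcases eq_or_lt_of_le hAt with heq | hlt
  · exact ⟨A, hAs, hAm, heq⟩
  · exfalso
    have h1 : t - P A ≤ P (s \ A) := by
      rw [measure_diff hAs hAm.nullMeasurableSet (measure_ne_top P A)]
      exact tsub_le_tsub_right ht _
    have h2 : 0 < P (s \ A) := lt_of_lt_of_le (tsub_pos_of_lt hlt) h1
    obtain ⟨w, hws, hwm, hw0, hwle⟩ := sms_small P hP (hs.diff hAm) h2 (tsub_pos_of_lt hlt)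
    have hwU : ∀ n, P w / 2 ≤ P (v (U n)) := by
      intro n
      have hsub : w ⊆ s \ (U n).1 :=
        hws.trans (Set.diff_subset_diff_right (Set.subset_iUnion (fun k => (U k).1) n))
      have hbound : P (U n).1 + P w ≤ t := by
        calc P (U n).1 + P w ≤ P A + (t - P A) :=
              add_le_add (measure_mono (Set.subset_iUnion (fun k => (U k).1) n)) hwle
        _ = t := add_tsub_cancel_of_le hlt.le
      have hcomp := (hv (U n)).2 w hsub hwm hbound
      rw [ENNReal.div_le_iff_le_mul (Or.inl two_ne_zero) (Or.inl ENNReal.ofNat_ne_top), mul_comm]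
      exact hcomp
    have hgrow : ∀ n : ℕ, (n : ℝ≥0∞) * (P w / 2) ≤ P (U n).1 := by
      intro n; induction n with
      | zero => simp
      | succ n ih =>
        rw [hUsucc n]
        calc ((n + 1 : ℕ) : ℝ≥0∞) * (P w / 2) = (n : ℝ≥0∞) * (P w / 2) + P w / 2 := by
              push_cast; ring
        _ ≤ P (U n).1 + P (v (U n)) := add_le_add ih (hwU n)
        _ = P (F (U n)).1 := (hmeasadd (U n)).symm
    have hd0 : P w / 2 ≠ 0 := by
      simp only [ne_eq, ENNReal.div_eq_zero_iff, not_or]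
      exact ⟨hw0.ne', ENNReal.ofNat_ne_top⟩
    have hdtop : P w / 2 ≠ ∞ := by
      exact (ENNReal.div_lt_top (measure_ne_top P w) two_ne_zero).ne
    obtain ⟨n, hn⟩ := ENNReal.exists_nat_gt (ENNReal.div_lt_top htfin hd0).ne
    have hlt2 : t < (n : ℝ≥0∞) * (P w / 2) := by
      rw [← ENNReal.div_lt_iff (Or.inl hd0) (Or.inl hdtop)]
      exact hn
    exact absurd ((hgrow n).trans (U n).2.2.2) (not_le.2 hlt2)




lemma sms_partition (hP : Nonatomic P) :
    ∀ (n : ℕ) (s : Set Ω), MeasurableSet s → ∀ c : ℝ≥0∞, P s = n * c →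
    ∃ G : ℕ → Set Ω, (∀ i, G i ⊆ s) ∧ (∀ i, MeasurableSet (G i)) ∧ (∀ i < n, P (G i) = c) ∧
      Pairwise (Function.onFun Disjoint G) ∧ P (s \ ⋃ i ∈ Finset.range n, G i) = 0 := by
  intro n
  induction n with
  | zero =>
    intro s hs c hc
    refine ⟨fun _ => ∅, fun _ => Set.empty_subset _, fun _ => .empty,
      fun i hi => absurd hi (Nat.not_lt_zero i), fun i j _ => by simp [Function.onFun], ?_⟩
    simpa using hc
  | succ n ih =>
    intro s hs c hc
    have hstop := measure_ne_top P s
    have hcfin : c ≠ ∞ := by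
      intro hcc
      rw [hc, hcc, ENNReal.mul_top (by exact_mod_cast Nat.succ_ne_zero n)] at hstop
      exact hstop rfl
    have hcle : c ≤ P s := by
      rw [hc]
      exact le_mul_of_one_le_left (zero_le (a := c)) (by exact_mod_cast Nat.one_le_iff_ne_zero.2 (Nat.succ_ne_zero n))
    obtain ⟨E, hEs, hEm, hEc⟩ := sms_exists_subset P hP hs hcle
    have hdiffm : P (s \ E) = n * c := by
      rw [measure_diff hEs hEm.nullMeasurableSet (measure_ne_top P E), hEc, hc,
        Nat.cast_succ, add_mul, one_mul, ENNReal.add_sub_cancel_right hcfin]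
    obtain ⟨G', h1, h2, h3, h4, h5⟩ := ih (s \ E) (hs.diff hEm) c hdiffm
    refine ⟨fun i => Nat.casesOn i E G', ?_, ?_, ?_, ?_, ?_⟩
    · intro i; cases i with
      | zero => exact hEs
      | succ j => exact (h1 j).trans Set.diff_subset
    · intro i; cases i with
      | zero => exact hEm
      | succ j => exact h2 j
    · intro i hi; cases i with
      | zero => exact hEc
      | succ j => exact h3 j (Nat.succ_lt_succ_iff.1 hi)
    · intro i j hij
      match i, j with
      | 0, 0 => exact absurd rfl hij
      | 0, (j+1) => exact Set.disjoint_sdiff_right.mono_right (h1 j)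
      | (i+1), 0 => exact (Set.disjoint_sdiff_right.mono_right (h1 i)).symm
      | (i+1), (j+1) => exact h4 (fun hh => hij (congrArg Nat.succ hh))
    · have hset : s \ ⋃ i ∈ Finset.range (n+1), (fun i => Nat.casesOn i E G' : ℕ → Set Ω) i
          = (s \ E) \ ⋃ i ∈ Finset.range n, G' i := by
        ext ω
        simp only [Set.mem_diff, Set.mem_iUnion, Finset.mem_range, not_exists, exists_prop,
          not_and]
        constructor
        · rintro ⟨hω, hn⟩
          exact ⟨⟨hω, fun hE => hn 0 (Nat.succ_pos n) hE⟩,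
            fun j hj hG => hn (j+1) (Nat.succ_lt_succ hj) hG⟩
        · rintro ⟨⟨hω, hE⟩, hn⟩
          refine ⟨hω, ?_⟩
          intro i hi hG
          cases i with
          | zero => exact hE hG
          | succ j => exact hn j (Nat.succ_lt_succ_iff.1 hi) hG
      rw [hset]; exact h5

lemma sms_sum_indicator {n : ℕ} {s : Set Ω} (G : ℕ → Set Ω) (hsub : ∀ i, G i ⊆ s)
    (hdisj : Pairwise (Function.onFun Disjoint G))
    (hnull : P (s \ ⋃ i ∈ Finset.range n, G i) = 0) :
    (fun ω => ∑ i ∈ Finset.range n, (G i).indicator (fun _ => (1:ℝ)) ω)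
      =ᵐ[P] s.indicator (fun _ => (1:ℝ)) := by
  have hmem : ∀ᵐ ω ∂P, ω ∉ s \ ⋃ i ∈ Finset.range n, G i :=
    measure_eq_zero_iff_ae_notMem.1 hnull
  filter_upwards [hmem] with ω hω
  by_cases hωs : ω ∈ s
  · have hU : ω ∈ ⋃ i ∈ Finset.range n, G i := by
      by_contra hcon; exact hω ⟨hωs, hcon⟩
    simp only [Set.mem_iUnion, Finset.mem_range, exists_prop] at hU
    obtain ⟨i0, hi0n, hi0⟩ := hU
    rw [Finset.sum_eq_single i0]
    · rw [Set.indicator_of_mem hi0, Set.indicator_of_mem hωs]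
    · intro j hj hji
      exact Set.indicator_of_notMem (fun hωj => Set.disjoint_left.1 (hdisj hji) hωj hi0) _
    · intro hcon; exact absurd (Finset.mem_range.2 hi0n) hcon
  · rw [Set.indicator_of_notMem hωs]
    exact Finset.sum_eq_zero fun j _ => Set.indicator_of_notMem (fun hωj => hωs (hsub j hωj)) _

end MeasureLemmas

section LpLemmas
variable {Ω : Type*} [MeasurableSpace Ω] (P : Measure Ω) [IsProbabilityMeasure P]
  {p : ℝ≥0∞} [Fact (1 ≤ p)]

lemma sms_coeFn_sum {ι : Type*} (s : Finset ι) (f : ι → Lp ℝ p P) :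
    ⇑(∑ i ∈ s, f i) =ᵐ[P] fun ω => ∑ i ∈ s, f i ω := by
  classical
  induction s using Finset.induction_on with
  | empty => simp only [Finset.sum_empty]; exact Lp.coeFn_zero ℝ p P
  | insert a s h ih =>
    rw [Finset.sum_insert h]
    filter_upwards [Lp.coeFn_add (f a) (∑ i ∈ s, f i), ih] with ω h1 h2
    rw [Finset.sum_insert h]
    simp only [h1, Pi.add_apply, h2]

lemma sms_sum_indLp {n : ℕ} {s : Set Ω} (hs : MeasurableSet s) (G : ℕ → Set Ω)
    (hGm : ∀ i, MeasurableSet (G i)) (hsub : ∀ i, G i ⊆ s)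
    (hdisj : Pairwise (Function.onFun Disjoint G))
    (hnull : P (s \ ⋃ i ∈ Finset.range n, G i) = 0) :
    (∑ i ∈ Finset.range n, indicatorConstLp p (hGm i) (measure_ne_top P (G i)) (1:ℝ))
      = indicatorConstLp p hs (measure_ne_top P s) (1:ℝ) := by
  apply Lp.ext
  have h1 := sms_coeFn_sum P (Finset.range n)
    (fun i => indicatorConstLp p (hGm i) (measure_ne_top P (G i)) (1:ℝ))
  have h2 : ∀ᵐ ω ∂P, ∀ i ∈ Finset.range n,
      (indicatorConstLp p (hGm i) (measure_ne_top P (G i)) (1:ℝ)) ω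
        = (G i).indicator (fun _ => (1:ℝ)) ω :=
    (ae_ball_iff (Finset.range n).countable_toSet).2 fun i _ => indicatorConstLp_coeFn
  have h3 := sms_sum_indicator P G hsub hdisj hnull
  have h4 : ⇑(indicatorConstLp p hs (measure_ne_top P s) (1:ℝ))
      =ᵐ[P] s.indicator (fun _ => (1:ℝ)) := indicatorConstLp_coeFn
  filter_upwards [h1, h2, h3, h4] with ω e1 e2 e3 e4
  rw [e1]
  calc ∑ i ∈ Finset.range n,
        (indicatorConstLp p (hGm i) (measure_ne_top P (G i)) (1:ℝ)) ω
      = ∑ i ∈ Finset.range n, (G i).indicator (fun _ => (1:ℝ)) ω :=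
        Finset.sum_congr rfl e2
    _ = s.indicator (fun _ => (1:ℝ)) ω := e3
    _ = _ := e4.symm

lemma sms_identDistrib {E F : Set Ω} (hE : MeasurableSet E) (hF : MeasurableSet F)
    (h : P E = P F) :
    IdentDistrib (⇑(indicatorConstLp p hE (measure_ne_top P E) (1:ℝ)))
      (⇑(indicatorConstLp p hF (measure_ne_top P F) (1:ℝ))) P P := by
  classical
  have hmE : Measurable (E.indicator fun _ => (1:ℝ)) := measurable_const.indicator hE
  have hmF : Measurable (F.indicator fun _ => (1:ℝ)) := measurable_const.indicator hF
  have hbase : IdentDistrib (E.indicator fun _ => (1:ℝ)) (F.indicator fun _ => (1:ℝ)) P P := by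
    refine ⟨hmE.aemeasurable, hmF.aemeasurable, ?_⟩
    refine Measure.ext fun t ht => ?_
    rw [Measure.map_apply hmE ht, Measure.map_apply hmF ht]
    have hpre : ∀ S : Set Ω, (S.indicator (fun _ => (1:ℝ)))⁻¹' t =
        (if (1:ℝ) ∈ t then S else ∅) ∪ (if (0:ℝ) ∈ t then Sᶜ else ∅) := by
      intro S; ext ω
      by_cases hω : ω ∈ S <;> by_cases h1 : (1:ℝ) ∈ t <;> by_cases h0 : (0:ℝ) ∈ t <;>
        simp [Set.indicator, hω, h1, h0]
    rw [hpre E, hpre F]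
    by_cases h1 : (1:ℝ) ∈ t <;> by_cases h0 : (0:ℝ) ∈ t
    · simp only [if_pos h1, if_pos h0, Set.union_compl_self]
    · simp only [if_pos h1, if_neg h0, Set.union_empty]
      exact h
    · simp only [if_neg h1, if_pos h0, Set.empty_union]
      rw [measure_compl hE (measure_ne_top P E), measure_compl hF (measure_ne_top P F), h]
    · simp only [if_neg h1, if_neg h0, Set.union_empty]
  have hcE : ⇑(indicatorConstLp p hE (measure_ne_top P E) (1:ℝ))
      =ᵐ[P] E.indicator (fun _ => (1:ℝ)) := indicatorConstLp_coeFn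
  have hcF : ⇑(indicatorConstLp p hF (measure_ne_top P F) (1:ℝ))
      =ᵐ[P] F.indicator (fun _ => (1:ℝ)) := indicatorConstLp_coeFn
  exact (IdentDistrib.of_ae_eq (Lp.aestronglyMeasurable _).aemeasurable hcE).trans
    (hbase.trans (IdentDistrib.of_ae_eq hmF.aemeasurable hcF.symm))

lemma sms_module_id {M : Type*} [AddCommGroup M] [Module ℝ M] (a b : ℕ → M) (k N : ℕ)
    (hN : (N:ℝ) ≠ 0) :
    ∑ i ∈ Finset.range k, ∑ j ∈ Finset.range N, ((N:ℝ)⁻¹) • (a i - b j)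
      = (∑ i ∈ Finset.range k, a i) - ((k:ℝ)/(N:ℝ)) • ∑ j ∈ Finset.range N, b j := by
  have hrow : ∀ i, ∑ j ∈ Finset.range N, ((N:ℝ)⁻¹) • (a i - b j)
      = a i - ((N:ℝ)⁻¹) • ∑ j ∈ Finset.range N, b j := by
    intro i
    rw [← Finset.smul_sum, Finset.sum_sub_distrib, Finset.sum_const, Finset.card_range,
      smul_sub]
    congr 1
    rw [← Nat.cast_smul_eq_nsmul ℝ N (a i), smul_smul, inv_mul_cancel₀ hN, one_smul]
  calc ∑ i ∈ Finset.range k, ∑ j ∈ Finset.range N, ((N:ℝ)⁻¹) • (a i - b j)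
      = ∑ i ∈ Finset.range k, (a i - ((N:ℝ)⁻¹) • ∑ j ∈ Finset.range N, b j) :=
        Finset.sum_congr rfl fun i _ => hrow i
    _ = (∑ i ∈ Finset.range k, a i) - k • (((N:ℝ)⁻¹) • ∑ j ∈ Finset.range N, b j) := by
        rw [Finset.sum_sub_distrib, Finset.sum_const, Finset.card_range]
    _ = _ := by
        rw [← Nat.cast_smul_eq_nsmul ℝ, smul_smul, div_eq_mul_inv]

end LpLemmas

lemma sms_integral_lipschitz {Ω : Type*} [MeasurableSpace Ω] (P : Measure Ω)
    [IsProbabilityMeasure P] (p : ℝ≥0∞) [Fact (1 ≤ p)] :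
    LipschitzWith 1 (fun f : Lp ℝ p P => ∫ ω, f ω ∂P) := by
  have hp1 : (1:ℝ≥0∞) ≤ p := Fact.out
  apply LipschitzWith.of_dist_le_mul
  intro f g
  rw [NNReal.coe_one, one_mul, Real.dist_eq, dist_eq_norm]
  have hfi : Integrable f P := (Lp.memLp f).integrable hp1
  have hgi : Integrable g P := (Lp.memLp g).integrable hp1
  have h1 : ∫ ω, f ω ∂P - ∫ ω, g ω ∂P = ∫ ω, (f - g) ω ∂P := by
    rw [integral_congr_ae (Lp.coeFn_sub f g)]
    simp only [Pi.sub_apply]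
    exact (integral_sub hfi hgi).symm
  calc |∫ ω, f ω ∂P - ∫ ω, g ω ∂P| = |∫ ω, (f - g) ω ∂P| := by rw [h1]
  _ ≤ ∫ ω, ‖(f - g) ω‖ ∂P := by
      rw [← Real.norm_eq_abs]; exact norm_integral_le_integral_norm _
  _ = (eLpNorm (⇑(f - g)) 1 P).toReal := by
      rw [integral_norm_eq_lintegral_enorm (Lp.aestronglyMeasurable (f - g)),
        ← eLpNorm_one_eq_lintegral_enorm]
  _ ≤ (eLpNorm (⇑(f - g)) p P).toReal :=
      ENNReal.toReal_mono (Lp.eLpNorm_ne_top (f - g))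
        (eLpNorm_le_eLpNorm_of_exponent_le hp1 (Lp.aestronglyMeasurable (f - g)))
  _ = ‖f - g‖ := (Lp.norm_def (f - g)).symm

lemma sms_indicator_mem {Ω : Type*} [MeasurableSpace Ω] (P : Measure Ω) [IsProbabilityMeasure P]
    (hP : Nonatomic P) (p : ℝ≥0∞) [Fact (1 ≤ p)] (hp : p ≠ ∞)
    {A : Set Ω} (hA : MeasurableSet A) :
    indicatorConstLp p hA (measure_ne_top P A) (1:ℝ) - (P A).toReal • Lp.const p P (1:ℝ)
      ∈ closure ((Submodule.span ℝ {W : Lp ℝ p P |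
        ∃ U V : Lp ℝ p P, IdentDistrib (U : Ω → ℝ) (V : Ω → ℝ) P P ∧ W = U - V} :
          Submodule ℝ (Lp ℝ p P)) : Set (Lp ℝ p P)) := by
  have hp1 : (1:ℝ≥0∞) ≤ p := Fact.out
  have hp0 : p ≠ 0 := (lt_of_lt_of_le one_pos hp1).ne'
  have hpr1 : 1 ≤ p.toReal := by
    have := ENNReal.toReal_mono hp hp1
    simpa using this
  have hpr0 : 0 < p.toReal := lt_of_lt_of_le one_pos hpr1
  rw [Metric.mem_closure_iff]
  intro ε hε
  set δ := min (ε/3) 1 with hδdef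
  have hδ0 : 0 < δ := lt_min (by linarith) one_pos
  have hδ1 : δ ≤ 1 := min_le_right _ _
  have hδε : δ ≤ ε/3 := min_le_left _ _
  obtain ⟨n0, hn0⟩ := exists_nat_one_div_lt (Real.rpow_pos_of_pos hδ0 p.toReal)
  set N := n0 + 1 with hNdef
  have hNpos : 0 < (N:ℝ) := by positivity
  have hNlt : 1 / (N:ℝ) < δ ^ p.toReal := by
    have : ((N:ℕ):ℝ) = (n0:ℝ) + 1 := by rw [hNdef]; push_cast; ring
    rw [this]; exact hn0
  have hNne : (N:ℝ) ≠ 0 := hNpos.ne'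
  have hNE0 : ((N:ℕ) : ℝ≥0∞) ≠ 0 := Nat.cast_ne_zero.2 (Nat.succ_ne_zero n0)
  have hNEtop : ((N:ℕ) : ℝ≥0∞) ≠ ∞ := ENNReal.natCast_ne_top N
  set a := (P A).toReal with hadef
  have ha0 : 0 ≤ a := ENNReal.toReal_nonneg
  set k := ⌊(N:ℝ) * a⌋₊ with hkdef
  have hk1 : (k:ℝ) ≤ (N:ℝ) * a := Nat.floor_le (by positivity)
  have hk2 : (N:ℝ) * a < k + 1 := Nat.lt_floor_add_one _
  have hPA_fin : P A ≠ ∞ := measure_ne_top P A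
  have hτA : ((k:ℕ) : ℝ≥0∞) / (N:ℕ) ≤ P A := by
    rw [ENNReal.div_le_iff_le_mul (Or.inl hNE0) (Or.inl hNEtop)]
    have h1 : ((k:ℕ) : ℝ≥0∞) = ENNReal.ofReal (k:ℝ) := by
      simp [ENNReal.ofReal_natCast]
    have h2 : P A * (N:ℕ) = ENNReal.ofReal (a * (N:ℝ)) := by
      rw [ENNReal.ofReal_mul ha0, hadef, ENNReal.ofReal_toReal hPA_fin, ENNReal.ofReal_natCast]
    rw [h1, h2]
    refine ENNReal.ofReal_le_ofReal ?_
    calc (k:ℝ) ≤ (N:ℝ) * a := hk1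
    _ = a * (N:ℝ) := mul_comm _ _
  obtain ⟨A', hA'A, hA'm, hA'P⟩ := sms_exists_subset P hP hA hτA
  set c : ℝ≥0∞ := ((N:ℕ) : ℝ≥0∞)⁻¹ with hcdef
  have hA'c : P A' = k * c := by rw [hA'P, div_eq_mul_inv]
  have hunivc : P (Set.univ : Set Ω) = N * c := by
    rw [measure_univ, hcdef, ENNReal.mul_inv_cancel hNE0 hNEtop]
  obtain ⟨E, hEsub, hEm, hEc, hEdisj, hEnull⟩ := sms_partition P hP k A' hA'm c hA'c
  obtain ⟨F, hFsub, hFm, hFc, hFdisj, hFnull⟩ :=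
    sms_partition P hP N Set.univ MeasurableSet.univ c hunivc
  set Z := ∑ i ∈ Finset.range k, ∑ j ∈ Finset.range N,
      ((N:ℝ)⁻¹) • (indicatorConstLp p (hEm i) (measure_ne_top P (E i)) (1:ℝ)
        - indicatorConstLp p (hFm j) (measure_ne_top P (F j)) (1:ℝ)) with hZdef
  have hZmem : Z ∈ (Submodule.span ℝ {W : Lp ℝ p P | ∃ U V : Lp ℝ p P,
      IdentDistrib (U : Ω → ℝ) (V : Ω → ℝ) P P ∧ W = U - V} : Submodule ℝ (Lp ℝ p P)) := by
    refine Submodule.sum_mem _ fun i hi => Submodule.sum_mem _ fun j hj =>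
      Submodule.smul_mem _ _ (Submodule.subset_span ?_)
    refine ⟨_, _, sms_identDistrib P (hEm i) (hFm j) ?_, rfl⟩
    rw [hEc i (Finset.mem_range.1 hi), hFc j (Finset.mem_range.1 hj)]
  have hZeq : Z = indicatorConstLp p hA'm (measure_ne_top P A') (1:ℝ)
      - ((k:ℝ)/(N:ℝ)) • Lp.const p P (1:ℝ) := by
    rw [hZdef, sms_module_id _ _ k N hNne]
    congr 1
    · exact sms_sum_indLp P hA'm E hEm hEsub hEdisj hEnull
    · rw [sms_sum_indLp P MeasurableSet.univ F hFm hFsub hFdisj hFnull, indicatorConstLp_univ]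
  refine ⟨Z, hZmem, ?_⟩
  rw [hZeq, dist_eq_norm]
  have hkey : indicatorConstLp p hA (measure_ne_top P A) (1:ℝ) - a • Lp.const p P (1:ℝ)
      - (indicatorConstLp p hA'm (measure_ne_top P A') (1:ℝ)
          - ((k:ℝ)/(N:ℝ)) • Lp.const p P (1:ℝ))
      = (indicatorConstLp p hA (measure_ne_top P A) (1:ℝ)
          - indicatorConstLp p hA'm (measure_ne_top P A') (1:ℝ))
        - (a - (k:ℝ)/(N:ℝ)) • Lp.const p P (1:ℝ) := by
    rw [sub_smul]; abel
  rw [hkey]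
  have hx : (P (A \ A')).toReal = a - (k:ℝ)/(N:ℝ) := by
    rw [measure_diff hA'A hA'm.nullMeasurableSet (measure_ne_top P A'), hA'P,
      ENNReal.toReal_sub_of_le hτA hPA_fin]
    congr 1
    rw [ENNReal.toReal_div]
    simp
  have hx0 : 0 ≤ a - (k:ℝ)/(N:ℝ) := by
    have : (k:ℝ)/(N:ℝ) ≤ a := by
      rw [div_le_iff₀ hNpos]
      calc (k:ℝ) ≤ (N:ℝ) * a := hk1
      _ = a * (N:ℝ) := mul_comm _ _
    linarith
  have hxle : a - (k:ℝ)/(N:ℝ) < 1/(N:ℝ) := by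
    have h1 : a < (1 + (k:ℝ))/(N:ℝ) := by
      rw [lt_div_iff₀ hNpos]
      nlinarith [hk2]
    have h2 : (1 + (k:ℝ))/(N:ℝ) = 1/(N:ℝ) + (k:ℝ)/(N:ℝ) := by ring
    linarith
  have hnorm1 : ‖indicatorConstLp p hA (measure_ne_top P A) (1:ℝ)
      - indicatorConstLp p hA'm (measure_ne_top P A') (1:ℝ)‖
      = (P (A \ A')).toReal ^ (1/p.toReal) := by
    rw [← dist_eq_norm, dist_indicatorConstLp_eq_norm, norm_indicatorConstLp hp0 hp,
      norm_one, one_mul, symmDiff_of_ge hA'A, measureReal_def]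
  have hnormc : ‖Lp.const p P (1:ℝ)‖ = 1 := by
    rw [Lp.norm_const' (μ := P) (p := p) (c := (1:ℝ)) hp0 hp, measureReal_def, measure_univ]
    simp
  have hbound1 : (P (A \ A')).toReal ^ (1/p.toReal) ≤ δ := by
    have hxlt : (P (A \ A')).toReal < δ ^ p.toReal := by
      rw [hx]; linarith
    have h1 : (P (A \ A')).toReal ^ (1/p.toReal) ≤ (δ ^ p.toReal) ^ (1/p.toReal) :=
      Real.rpow_le_rpow (by rw [hx]; exact hx0) hxlt.le (by positivity)
    have h2 : (δ ^ p.toReal) ^ (1/p.toReal) = δ := by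
      rw [← Real.rpow_mul hδ0.le, mul_one_div_cancel hpr0.ne', Real.rpow_one]
    rw [h2] at h1; exact h1
  have hbound2 : |a - (k:ℝ)/(N:ℝ)| ≤ δ := by
    rw [abs_of_nonneg hx0]
    have h1 : δ ^ p.toReal ≤ δ := by
      have := Real.rpow_le_rpow_of_exponent_ge hδ0 hδ1 hpr1
      rwa [Real.rpow_one] at this
    linarith
  calc ‖(indicatorConstLp p hA (measure_ne_top P A) (1:ℝ)
          - indicatorConstLp p hA'm (measure_ne_top P A') (1:ℝ))
        - (a - (k:ℝ)/(N:ℝ)) • Lp.const p P (1:ℝ)‖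
      ≤ ‖indicatorConstLp p hA (measure_ne_top P A) (1:ℝ)
          - indicatorConstLp p hA'm (measure_ne_top P A') (1:ℝ)‖
        + ‖(a - (k:ℝ)/(N:ℝ)) • Lp.const p P (1:ℝ)‖ := norm_sub_le _ _
  _ = (P (A \ A')).toReal ^ (1/p.toReal) + |a - (k:ℝ)/(N:ℝ)| * 1 := by
      rw [hnorm1, norm_smul, hnormc, Real.norm_eq_abs]
  _ ≤ δ + δ := by rw [mul_one]; exact add_le_add hbound1 hbound2
  _ < ε := by linarith

/-- For `1 ≤ p < ∞` and every `X ∈ L^p`, the element `X - E[X]·1` lies in the norm closure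
of the span of differences of identically distributed elements of `L^p`. -/
theorem sub_mean_mem_closure_span_Lp
    {Ω : Type*} [MeasurableSpace Ω] (P : Measure Ω) [IsProbabilityMeasure P]
    (hP : Nonatomic P) (p : ℝ≥0∞) [Fact (1 ≤ p)] (hp : p ≠ ∞)
    (X : Lp ℝ p P) :
    X - (∫ ω, X ω ∂P) • Lp.const p P (1 : ℝ) ∈
      closure ((Submodule.span ℝ {W : Lp ℝ p P |
        ∃ U V : Lp ℝ p P, IdentDistrib (U : Ω → ℝ) (V : Ω → ℝ) P P ∧ W = U - V} :
          Submodule ℝ (Lp ℝ p P)) : Set (Lp ℝ p P)) := by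
  have hp1 : (1:ℝ≥0∞) ≤ p := Fact.out
  set S : Set (Lp ℝ p P) := {W : Lp ℝ p P |
    ∃ U V : Lp ℝ p P, IdentDistrib (U : Ω → ℝ) (V : Ω → ℝ) P P ∧ W = U - V} with hS
  have hclosure_eq : closure ((Submodule.span ℝ S : Submodule ℝ (Lp ℝ p P)) : Set (Lp ℝ p P))
      = (((Submodule.span ℝ S).topologicalClosure : Submodule ℝ (Lp ℝ p P)) : Set (Lp ℝ p P)) :=
    (Submodule.topologicalClosure_coe _).symm
  revert X
  refine Lp.induction hp (fun f : Lp ℝ p P => f - (∫ ω, f ω ∂P) • Lp.const p P (1:ℝ) ∈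
      closure ((Submodule.span ℝ S : Submodule ℝ (Lp ℝ p P)) : Set (Lp ℝ p P))) ?_ ?_ ?_
  · intro c s hs hμs
    rw [Lp.simpleFunc.coe_indicatorConst]
    have hint : ∫ ω, (indicatorConstLp p hs hμs.ne c) ω ∂P = (P s).toReal * c := by
      rw [integral_indicatorConstLp hs hμs.ne c, smul_eq_mul, measureReal_def]
    rw [hint]
    have h1 := sms_indicator_mem P hP p hp hs
    have hsmul : indicatorConstLp p hs hμs.ne c
        = c • indicatorConstLp p hs hμs.ne (1:ℝ) := by
      apply Lp.ext
      filter_upwards [indicatorConstLp_coeFn (μ := P) (p := p) (hs := hs) (hμs := hμs.ne) (c := c),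
        Lp.coeFn_smul c (indicatorConstLp p hs hμs.ne (1:ℝ)),
        indicatorConstLp_coeFn (μ := P) (p := p) (hs := hs) (hμs := hμs.ne) (c := (1:ℝ))]
        with ω e1 e2 e3
      rw [e1, e2, Pi.smul_apply, e3, smul_eq_mul]
      by_cases hω : ω ∈ s <;> simp [Set.indicator, hω]
    rw [hsmul]
    have heq : c • indicatorConstLp p hs hμs.ne (1:ℝ)
        - ((P s).toReal * c) • Lp.const p P (1:ℝ)
        = c • (indicatorConstLp p hs hμs.ne (1:ℝ) - (P s).toReal • Lp.const p P (1:ℝ)) := by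
      rw [smul_sub, smul_smul, mul_comm]
    rw [heq, hclosure_eq]
    rw [hclosure_eq] at h1
    exact Submodule.smul_mem _ c h1
  · intro f g hf hg hfg hPf hPg
    have hif : Integrable f P := hf.integrable hp1
    have hig : Integrable g P := hg.integrable hp1
    have hsum : ∫ ω, (hf.toLp f + hg.toLp g) ω ∂P
        = (∫ ω, (hf.toLp f) ω ∂P) + ∫ ω, (hg.toLp g) ω ∂P := by
      rw [integral_congr_ae (Lp.coeFn_add (hf.toLp f) (hg.toLp g))]
      simp only [Pi.add_apply]
      have hif' : Integrable (⇑(hf.toLp f)) P := hif.congr (hf.coeFn_toLp).symm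
      have hig' : Integrable (⇑(hg.toLp g)) P := hig.congr (hg.coeFn_toLp).symm
      exact integral_add hif' hig'
    rw [hsum]
    have hre : (hf.toLp f + hg.toLp g)
        - ((∫ ω, (hf.toLp f) ω ∂P) + ∫ ω, (hg.toLp g) ω ∂P) • Lp.const p P (1:ℝ)
        = (hf.toLp f - (∫ ω, (hf.toLp f) ω ∂P) • Lp.const p P (1:ℝ))
          + (hg.toLp g - (∫ ω, (hg.toLp g) ω ∂P) • Lp.const p P (1:ℝ)) := by
      rw [add_smul]; abel
    rw [hre, hclosure_eq]
    rw [hclosure_eq] at hPf hPg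
    exact Submodule.add_mem _ hPf hPg
  · have hcont : Continuous fun f : Lp ℝ p P =>
        f - (∫ ω, f ω ∂P) • Lp.const p P (1:ℝ) :=
      continuous_id.sub (((sms_integral_lipschitz P p).continuous).smul continuous_const)
    exact isClosed_closure.preimage hcont
end
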